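/- arXiv:1205.1966 — 7 statements merged into one kernel-verified Lean document; each statement's English description precedes it below -/
import Mathlib

section
/- Let 𝔄 = (𝒜_t)_{t≥0} be a filtration on a probability space (Ω, 𝓕, ℙ) and ρ: Ω → [0,∞]. For all real numbers 0 ≤ s ≤ t one has 𝒢^ρ_{t−s} = 𝒢^{ρ+s}_t and 𝒜^ρ_{t−s} ⊆ 𝒜^{ρ+s}_t. -/
open MeasureTheory Set Filter
open scoped ENNReal NNReal

noncomputable section

variable {Ω : Type*}

/-- `𝒢^ρ`: the smallest filtration making the `[0,∞]`-valued map `ρ` a stopping time,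
`𝒢^ρ_t = σ({ρ ≤ s} : s ≤ t)`. -/
def genFilt (ρ : Ω → ℝ≥0∞) (t : ℝ≥0) : MeasurableSpace Ω :=
  MeasurableSpace.generateFrom {A | ∃ s : ℝ≥0, s ≤ t ∧ A = {ω | ρ ω ≤ (s : ℝ≥0∞)}}

/-- `𝔄^ρ`: the smallest right-continuous filtration containing `𝔄` for which `ρ` is a
stopping time, i.e. the right-continuous regularization of `t ↦ σ(𝒜_t, 𝒢^ρ_t)`. -/
def rcEnlarge (𝔄 : ℝ≥0 → MeasurableSpace Ω) (ρ : Ω → ℝ≥0∞) (t : ℝ≥0) :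
    MeasurableSpace Ω :=
  ⨅ s ∈ Set.Ioi t, (𝔄 s ⊔ genFilt ρ s)

/-- Iterated enlargement `𝔄^{ρ₀,…,ρ_{i-1}}`. -/
def enrichedFilt (𝔄 : ℝ≥0 → MeasurableSpace Ω) (ρ : ℕ → Ω → ℝ≥0∞) :
    ℕ → ℝ≥0 → MeasurableSpace Ω
  | 0 => 𝔄
  | i + 1 => rcEnlarge (enrichedFilt 𝔄 ρ i) (ρ i)

/-- `ρ : Ω → [0,∞]` is a stopping time with respect to the filtration `𝔄 = (𝒜_t)_{t ≥ 0}`. -/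
def IsStoppingTimeE (𝔄 : ℝ≥0 → MeasurableSpace Ω) (ρ : Ω → ℝ≥0∞) : Prop :=
  ∀ t : ℝ≥0, MeasurableSet[𝔄 t] {ω | ρ ω ≤ (t : ℝ≥0∞)}

/-- The σ-algebra `𝒜_ρ` of events prior to the random time `ρ`. -/
def sigmaAt (𝔄 : ℝ≥0 → MeasurableSpace Ω) (ρ : Ω → ℝ≥0∞) : MeasurableSpace Ω :=
  MeasurableSpace.generateFrom
    {A | ∀ t : ℝ≥0, MeasurableSet[𝔄 t] (A ∩ {ω | ρ ω ≤ (t : ℝ≥0∞)})}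

/-- Evaluation `Y(τ)` of a process at a `[0,∞]`-valued random time, with the convention
`Y(∞) := limsup_{t→∞} Y(t)`. -/
def evalAt (Y : ℝ≥0 → Ω → ℝ) (τ : Ω → ℝ≥0∞) (ω : Ω) : ℝ :=
  if τ ω ≠ ∞ then Y (τ ω).toNNReal ω
  else limsup (fun t : ℝ≥0 => Y t ω) atTop

/-- Right-continuity of a filtration. -/
def RightContinuousFilt (𝔄 : ℝ≥0 → MeasurableSpace Ω) : Prop :=
  ∀ t : ℝ≥0, 𝔄 t = ⨅ s ∈ Set.Ioi t, 𝔄 s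

variable {m0 : MeasurableSpace Ω}

/-- `Z` is (a version of) the essential supremum of the family of random variables `F`. -/
def IsEssSupFam (μ : Measure Ω) (F : Set (Ω → ℝ)) (Z : Ω → ℝ) : Prop :=
  (∀ f ∈ F, f ≤ᵐ[μ] Z) ∧ ∀ g : Ω → ℝ, (∀ f ∈ F, f ≤ᵐ[μ] g) → Z ≤ᵐ[μ] g

/-- The set of strategies `𝒮^n_σ(δ, 𝔄)` (0-indexed: `τ 0` is the first exercise `τ₁`,
`δ 0` is the first waiting time `δ₁`). -/
def IsStrategy (𝔄 : ℝ≥0 → MeasurableSpace Ω) (δ : ℕ → Ω → ℝ≥0∞) (n : ℕ)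
    (σ : Ω → ℝ≥0∞) (τ : ℕ → Ω → ℝ≥0∞) : Prop :=
  IsStoppingTimeE 𝔄 (τ 0) ∧ (∀ ω, σ ω ≤ τ 0 ω) ∧
    ∀ i : ℕ, i + 1 < n →
      IsStoppingTimeE (enrichedFilt 𝔄 (fun j ω => τ j ω + δ j ω) (i + 1)) (τ (i + 1)) ∧
      ∀ ω, τ i ω + δ i ω ≤ τ (i + 1) ω

/-- `Σ_{i=1}^n Y(τ_i)`. -/
def rewardSum (Y : ℝ≥0 → Ω → ℝ) (n : ℕ) (τ : ℕ → Ω → ℝ≥0∞) (ω : Ω) : ℝ :=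
  ∑ i ∈ Finset.range n, evalAt Y (τ i) ω

/-- The family of random variables whose essential supremum is `Z_n^{δ,𝔄}(σ)`. -/
def gainFam (μ : Measure Ω) (Y : ℝ≥0 → Ω → ℝ) (𝔄 : ℝ≥0 → MeasurableSpace Ω)
    (δ : ℕ → Ω → ℝ≥0∞) (n : ℕ) (σ : Ω → ℝ≥0∞) : Set (Ω → ℝ) :=
  {g | ∃ τ : ℕ → Ω → ℝ≥0∞, IsStrategy 𝔄 δ n σ τ ∧
    g = μ[rewardSum Y n τ | sigmaAt 𝔄 σ]}

/-- The family of random variables whose essential supremum is `Z_n^{δ,𝔄}(σ)_disc`. -/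
def gainFamDisc (μ : Measure Ω) (Y : ℝ≥0 → Ω → ℝ) (𝔄 : ℝ≥0 → MeasurableSpace Ω)
    (δ : ℕ → Ω → ℝ≥0∞) (n : ℕ) (σ : Ω → ℝ≥0∞) : Set (Ω → ℝ) :=
  {g | ∃ τ : ℕ → Ω → ℝ≥0∞, IsStrategy 𝔄 δ n σ τ ∧ (Set.range (τ 0)).Countable ∧
    g = μ[rewardSum Y n τ | sigmaAt 𝔄 σ]}

/-- The hitting time `ρ_τ^B = inf{t > τ : X(t) ∈ B}` of `B` strictly after the random time `τ`. -/
def hitAfterE (X : ℝ≥0 → Ω → ℝ) (B : Set ℝ) (τ : Ω → ℝ≥0∞) (ω : Ω) : ℝ≥0∞ :=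
  ⨅ u ∈ {u : ℝ≥0 | τ ω < (u : ℝ≥0∞) ∧ X u ω ∈ B}, (u : ℝ≥0∞)

/-- The set of strategies `𝒮^n_σ(B)` of the second model. -/
def IsStrategyB (𝔉 : ℝ≥0 → MeasurableSpace Ω) (X : ℝ≥0 → Ω → ℝ) (B : ℕ → Set ℝ)
    (n : ℕ) (σ : Ω → ℝ≥0∞) (τ : ℕ → Ω → ℝ≥0∞) : Prop :=
  (∀ i < n, IsStoppingTimeE 𝔉 (τ i)) ∧ (∀ ω, σ ω ≤ τ 0 ω) ∧
    ∀ i : ℕ, i + 1 < n → ∀ ω, hitAfterE X (B i) (τ i) ω ≤ τ (i + 1) ω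

/-- The family of random variables whose essential supremum is `Z_n^B(σ)` (second model). -/
def gainFamB (μ : Measure Ω) (Y : ℝ≥0 → Ω → ℝ) (𝔉 : ℝ≥0 → MeasurableSpace Ω)
    (X : ℝ≥0 → Ω → ℝ) (B : ℕ → Set ℝ) (n : ℕ) (σ : Ω → ℝ≥0∞) : Set (Ω → ℝ) :=
  {g | ∃ τ : ℕ → Ω → ℝ≥0∞, IsStrategyB 𝔉 X B n σ τ ∧
    g = μ[rewardSum Y n τ | sigmaAt 𝔉 σ]}

lemma measurableSet_genFilt {ρ : Ω → ℝ≥0∞} {s t : ℝ≥0} (hst : s ≤ t) :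
    MeasurableSet[genFilt ρ t] {ω | ρ ω ≤ (s : ℝ≥0∞)} :=
  MeasurableSpace.measurableSet_generateFrom ⟨s, hst, rfl⟩

lemma setOf_add_le_eq_setOf_le_sub (ρ : Ω → ℝ≥0∞) {s u : ℝ≥0} (hsu : s ≤ u) :
    {ω | ρ ω + (s : ℝ≥0∞) ≤ (u : ℝ≥0∞)} = {ω | ρ ω ≤ ((u - s : ℝ≥0) : ℝ≥0∞)} := by
  ext ω
  rw [mem_ofPred_eq, mem_ofPred_eq, ENNReal.coe_sub,
    ENNReal.le_sub_iff_add_le_right ENNReal.coe_ne_top (by exact_mod_cast hsu)]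

lemma setOf_add_le_eq_empty (ρ : Ω → ℝ≥0∞) {s u : ℝ≥0} (hus : u < s) :
    {ω | ρ ω + (s : ℝ≥0∞) ≤ (u : ℝ≥0∞)} = ∅ :=
  eq_empty_of_forall_notMem fun _ h =>
    (ENNReal.coe_lt_coe.mpr hus).not_ge (le_add_self.trans h)

lemma genFilt_add_le_genFilt_sub (ρ : Ω → ℝ≥0∞) (s t : ℝ≥0) :
    genFilt (fun ω => ρ ω + (s : ℝ≥0∞)) t ≤ genFilt ρ (t - s) := by
  refine MeasurableSpace.generateFrom_le ?_
  rintro _ ⟨u, hut, rfl⟩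
  rcases le_or_gt s u with hsu | hus
  · rw [setOf_add_le_eq_setOf_le_sub ρ hsu]
    exact measurableSet_genFilt (tsub_le_tsub_right hut s)
  · rw [setOf_add_le_eq_empty ρ hus]
    exact (genFilt ρ (t - s)).measurableSet_empty

lemma genFilt_sub_le_genFilt_add (ρ : Ω → ℝ≥0∞) {s t : ℝ≥0} (hst : s ≤ t) :
    genFilt ρ (t - s) ≤ genFilt (fun ω => ρ ω + (s : ℝ≥0∞)) t := by
  refine MeasurableSpace.generateFrom_le ?_
  rintro _ ⟨u, hut, rfl⟩
  have hus : u + s ≤ t := le_tsub_iff_right hst |>.mp hut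
  have hset : {ω | ρ ω ≤ (u : ℝ≥0∞)} = {ω | ρ ω + (s : ℝ≥0∞) ≤ ((u + s : ℝ≥0) : ℝ≥0∞)} := by
    ext ω
    rw [mem_ofPred_eq, mem_ofPred_eq, ENNReal.coe_add,
      ENNReal.add_le_add_iff_right ENNReal.coe_ne_top]
  rw [hset]
  exact measurableSet_genFilt hus

lemma rcEnlarge_sub_le_rcEnlarge_add {𝔄 : ℝ≥0 → MeasurableSpace Ω} (hmono : Monotone 𝔄)
    (ρ : Ω → ℝ≥0∞) {s t : ℝ≥0} (hst : s ≤ t) :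
    rcEnlarge 𝔄 ρ (t - s) ≤ rcEnlarge 𝔄 (fun ω => ρ ω + (s : ℝ≥0∞)) t := by
  refine le_iInf₂ fun r (htr : t < r) => ?_
  calc rcEnlarge 𝔄 ρ (t - s) ≤ 𝔄 (r - s) ⊔ genFilt ρ (r - s) :=
        iInf₂_le (r - s) (tsub_lt_tsub_right_of_le hst htr)
    _ ≤ 𝔄 r ⊔ genFilt (fun ω => ρ ω + (s : ℝ≥0∞)) r :=
        sup_le_sup (hmono tsub_le_self) (genFilt_sub_le_genFilt_add ρ (hst.trans htr.le))

theorem genFilt_sub_eq_and_rcEnlarge_sub_le_general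
    (𝔄 : ℝ≥0 → MeasurableSpace Ω) (hmono : Monotone 𝔄)
    (ρ : Ω → ℝ≥0∞) (s t : ℝ≥0) (hst : s ≤ t) :
    genFilt ρ (t - s) = genFilt (fun ω => ρ ω + (s : ℝ≥0∞)) t ∧
      rcEnlarge 𝔄 ρ (t - s) ≤ rcEnlarge 𝔄 (fun ω => ρ ω + (s : ℝ≥0∞)) t :=
  ⟨(genFilt_sub_le_genFilt_add ρ hst).antisymm (genFilt_add_le_genFilt_sub ρ s t),
    rcEnlarge_sub_le_rcEnlarge_add hmono ρ hst⟩

/-- For `0 ≤ s ≤ t` one has `𝒢^ρ_{t-s} = 𝒢^{ρ+s}_t` and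
`𝒜^ρ_{t-s} ⊆ 𝒜^{ρ+s}_t`. -/
theorem genFilt_sub_eq_and_rcEnlarge_sub_le
    (μ : Measure Ω) [IsProbabilityMeasure μ]
    (𝔄 : ℝ≥0 → MeasurableSpace Ω) (hle : ∀ t, 𝔄 t ≤ m0) (hmono : Monotone 𝔄)
    (ρ : Ω → ℝ≥0∞) (s t : ℝ≥0) (hst : s ≤ t) :
    genFilt ρ (t - s) = genFilt (fun ω => ρ ω + (s : ℝ≥0∞)) t ∧
      rcEnlarge 𝔄 ρ (t - s) ≤ rcEnlarge 𝔄 (fun ω => ρ ω + (s : ℝ≥0∞)) t :=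
  genFilt_sub_eq_and_rcEnlarge_sub_le_general 𝔄 hmono ρ s t hst

end
end

section
/- Let 𝔄 = (𝒜_t)_{t≥0} be a filtration on a probability space (Ω, 𝓕, ℙ), ρ: Ω → [0,∞], and let σ and τ be 𝔄-stopping times. Then for every t ≥ 0, 𝒜^{σ+ρ}_t |_{{σ=τ}} = 𝒜^{τ+ρ}_t |_{{σ=τ}}, where for a σ-algebra 𝒞 and a set D ⊆ Ω one writes 𝒞|_D := {C ∩ D : C ∈ 𝒞}. -/
/-!
On `D = {σ = τ}` the times `σ + ρ` and `τ + ρ` coincide, so for each fixed `s` the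
σ-algebras `𝒜_s ∨ 𝒢^{σ+ρ}_s` and `𝒜_s ∨ 𝒢^{τ+ρ}_s` have the same trace on `D`. Taking the
trace on `D` is pulling back along the inclusion `D ↪ Ω`. For a monotone filtration the
right-continuous regularization is the decreasing countable intersection over
`s = t + 1/(n+1)`, and pullback commutes with such intersections: if `S` is traced by `C_n`
at every level `n`, it is also traced by `liminf C_n`, which lies in every level.
-/


open MeasureTheory Set Filter
open scoped ENNReal NNReal

noncomputable section

variable {Ω : Type*}

variable {m0 : MeasurableSpace Ω}

/-- The trace σ-algebra `𝒞|_D = {C ∩ D : C ∈ 𝒞}`. -/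
def restrictSets (m : MeasurableSpace Ω) (D : Set Ω) : Set (Set Ω) :=
  {A | ∃ C : Set Ω, MeasurableSet[m] C ∧ A = C ∩ D}


namespace MeasurableSpace

variable {α β : Type*}

theorem comap_iInf_of_antitone {m : ℕ → MeasurableSpace α} (hm : Antitone m) (f : β → α) :
    (⨅ n, m n).comap f = ⨅ n, (m n).comap f := by
  refine le_antisymm (le_iInf fun n => comap_mono (iInf_le m n)) fun S hS => ?_
  have hS' : ∀ n, ∃ C, MeasurableSet[m n] C ∧ f ⁻¹' C = S := fun n =>
    measurableSet_comap.1 (measurableSet_iInf.1 hS n)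
  choose C hC hCS using hS'
  set E : ℕ → Set α := fun N => ⋂ k, C (N + k)
  have hE : Monotone E := monotone_nat_of_le_succ fun N =>
    iInter_mono' fun k => ⟨k + 1, by rw [Nat.add_right_comm, ← Nat.add_assoc]⟩
  refine measurableSet_comap.2 ⟨⋃ N, E N, measurableSet_iInf.2 fun n => ?_, ?_⟩
  · rw [← hE.iUnion_nat_add n]
    exact .iUnion fun N => .iInter fun k => hm (by omega : n ≤ N + n + k) _ (hC _)
  · simp only [E, preimage_iUnion, preimage_iInter, hCS, iInter_const, iUnion_const]

end MeasurableSpace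

theorem antitone_add_inv_natCast_add_one (t : ℝ≥0) :
    Antitone fun n : ℕ => t + ((n : ℝ≥0) + 1)⁻¹ := fun a b hab => by
  dsimp only
  gcongr

theorem Monotone.biInf_Ioi_eq_iInf_add_inv {α : Type*} [CompleteLattice α] {F : ℝ≥0 → α}
    (hF : Monotone F) (t : ℝ≥0) :
    ⨅ s ∈ Ioi t, F s = ⨅ n : ℕ, F (t + ((n : ℝ≥0) + 1)⁻¹) := by
  refine le_antisymm (le_iInf fun n => biInf_le F (lt_add_of_pos_right t (by positivity)))
    (le_iInf₂ fun s hs => ?_)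
  obtain ⟨n, hn⟩ := exists_nat_one_div_lt (tsub_pos_of_lt (mem_Ioi.1 hs))
  refine iInf_le_of_le n (hF ?_)
  rw [one_div] at hn
  calc t + ((n : ℝ≥0) + 1)⁻¹ ≤ t + (s - t) := by gcongr
    _ = s := add_tsub_cancel_of_le (mem_Ioi.1 hs).le

theorem genFilt_mono (ρ : Ω → ℝ≥0∞) : Monotone (genFilt ρ) := fun _ _ hst =>
  MeasurableSpace.generateFrom_mono fun _ ⟨s, hs, hA⟩ => ⟨s, hs.trans hst, hA⟩

theorem comap_genFilt {β : Type*} (ρ : Ω → ℝ≥0∞) (g : β → Ω) (s : ℝ≥0) :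
    (genFilt ρ s).comap g = genFilt (ρ ∘ g) s := by
  rw [genFilt, genFilt, MeasurableSpace.comap_generateFrom]
  congr 1
  ext A
  constructor
  · rintro ⟨_, ⟨u, hu, rfl⟩, rfl⟩
    exact ⟨u, hu, rfl⟩
  · rintro ⟨u, hu, rfl⟩
    exact ⟨_, ⟨u, hu, rfl⟩, rfl⟩

theorem rcEnlarge_eq_iInf_nat {𝔄 : ℝ≥0 → MeasurableSpace Ω} (hmono : Monotone 𝔄)
    (ρ : Ω → ℝ≥0∞) (t : ℝ≥0) :
    rcEnlarge 𝔄 ρ t = ⨅ n : ℕ, 𝔄 (t + ((n : ℝ≥0) + 1)⁻¹) ⊔ genFilt ρ (t + ((n : ℝ≥0) + 1)⁻¹) :=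
  (hmono.sup (genFilt_mono ρ)).biInf_Ioi_eq_iInf_add_inv t

theorem comap_rcEnlarge {β : Type*} {𝔄 : ℝ≥0 → MeasurableSpace Ω} (hmono : Monotone 𝔄)
    (ρ : Ω → ℝ≥0∞) (g : β → Ω) (t : ℝ≥0) :
    (rcEnlarge 𝔄 ρ t).comap g = rcEnlarge (fun s => (𝔄 s).comap g) (ρ ∘ g) t := by
  have hanti : Antitone fun n : ℕ =>
      𝔄 (t + ((n : ℝ≥0) + 1)⁻¹) ⊔ genFilt ρ (t + ((n : ℝ≥0) + 1)⁻¹) :=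
    (hmono.sup (genFilt_mono ρ)).comp_antitone (antitone_add_inv_natCast_add_one t)
  rw [rcEnlarge_eq_iInf_nat hmono,
    rcEnlarge_eq_iInf_nat fun _ _ h => MeasurableSpace.comap_mono (hmono h),
    MeasurableSpace.comap_iInf_of_antitone hanti]
  simp only [MeasurableSpace.comap_sup, comap_genFilt]

theorem restrictSets_subset_of_comap_le {m m' : MeasurableSpace Ω} {D : Set Ω}
    (h : m.comap ((↑) : D → Ω) ≤ m'.comap (↑)) : restrictSets m D ⊆ restrictSets m' D := by
  rintro _ ⟨C, hC, rfl⟩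
  obtain ⟨C', hC', hpre⟩ := h _ ⟨C, hC, rfl⟩
  refine ⟨C', hC', ?_⟩
  rw [inter_comm C, inter_comm C']
  exact (Subtype.preimage_coe_eq_preimage_coe_iff.1 hpre).symm

theorem rcEnlarge_restrict_eq_on_agreement_general
    (𝔄 : ℝ≥0 → MeasurableSpace Ω) (hmono : Monotone 𝔄)
    (σ τ : Ω → ℝ≥0∞)
    (ρ : Ω → ℝ≥0∞) (t : ℝ≥0) :
    restrictSets (rcEnlarge 𝔄 (fun ω => σ ω + ρ ω) t) {ω | σ ω = τ ω} =
      restrictSets (rcEnlarge 𝔄 (fun ω => τ ω + ρ ω) t) {ω | σ ω = τ ω} := by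
  have hagree : (fun ω => σ ω + ρ ω) ∘ ((↑) : {ω | σ ω = τ ω} → Ω) =
      (fun ω => τ ω + ρ ω) ∘ (↑) :=
    funext fun ω => congrArg (· + ρ ω) ω.2
  have hcomap : (rcEnlarge 𝔄 (fun ω => σ ω + ρ ω) t).comap ((↑) : {ω | σ ω = τ ω} → Ω) =
      (rcEnlarge 𝔄 (fun ω => τ ω + ρ ω) t).comap (↑) := by
    rw [comap_rcEnlarge hmono, comap_rcEnlarge hmono, hagree]
  exact subset_antisymm (restrictSets_subset_of_comap_le hcomap.le)
    (restrictSets_subset_of_comap_le hcomap.ge)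

/-- For `𝔄`-stopping times `σ, τ` and any `ρ : Ω → [0,∞]`,
`𝒜^{σ+ρ}_t |_{{σ=τ}} = 𝒜^{τ+ρ}_t |_{{σ=τ}}` for every `t ≥ 0`. -/
theorem rcEnlarge_restrict_eq_on_agreement
    (μ : Measure Ω) [IsProbabilityMeasure μ]
    (𝔄 : ℝ≥0 → MeasurableSpace Ω) (hle : ∀ t, 𝔄 t ≤ m0) (hmono : Monotone 𝔄)
    (σ τ : Ω → ℝ≥0∞) (hσ : IsStoppingTimeE 𝔄 σ) (hτ : IsStoppingTimeE 𝔄 τ)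
    (ρ : Ω → ℝ≥0∞) (t : ℝ≥0) :
    restrictSets (rcEnlarge 𝔄 (fun ω => σ ω + ρ ω) t) {ω | σ ω = τ ω} =
      restrictSets (rcEnlarge 𝔄 (fun ω => τ ω + ρ ω) t) {ω | σ ω = τ ω} :=
  rcEnlarge_restrict_eq_on_agreement_general 𝔄 hmono σ τ ρ t

end
end

section
/- Let 𝔄 = (𝒜_t)_{t≥0} be a filtration on a probability space (Ω, 𝓕, ℙ), ρ: Ω → [0,∞], and let σ ≤ τ be 𝔄-stopping times whose ranges are countable. Then for every t ≥ 0, 𝒜^{σ+ρ}_t ⊇ 𝒜^{τ+ρ}_t. -/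
open MeasureTheory Set Filter
open scoped ENNReal NNReal

noncomputable section

variable {Ω : Type*}

variable {m0 : MeasurableSpace Ω}

/-!
On `{σ = a, τ = b}` with `a ≤ b ≤ u < ∞` the event `{τ + ρ ≤ u}` is `{σ + ρ ≤ a + (u - b)}`,
and `a + (u - b) ≤ u`. Since `σ` and `τ` take countably many values, `{τ + ρ ≤ u}` is a
countable union of such pieces, each in `𝒜_s ∨ 𝒢^{σ+ρ}_s` as soon as `u ≤ s`.
-/

lemma IsStoppingTimeE.measurableSet_le_of_le {𝔄 : ℝ≥0 → MeasurableSpace Ω} (hmono : Monotone 𝔄)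
    {σ : Ω → ℝ≥0∞} (hσ : IsStoppingTimeE 𝔄 σ) {s : ℝ≥0} {x : ℝ≥0∞} (hx : x ≤ s) :
    MeasurableSet[𝔄 s] {ω | σ ω ≤ x} := by
  lift x to ℝ≥0 using ne_top_of_le_ne_top ENNReal.coe_ne_top hx
  exact hmono (ENNReal.coe_le_coe.mp hx) _ (hσ x)

lemma measurableSet_eq_of_countable_range {m : MeasurableSpace Ω} {α : Type*} [LinearOrder α]
    {f : Ω → α} (hf : (range f).Countable) {x : α}
    (h : ∀ y ≤ x, MeasurableSet[m] {ω | f ω ≤ y}) :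
    MeasurableSet[m] {ω | f ω = x} := by
  have hlt : {ω | f ω < x} = ⋃ y ∈ range f ∩ Iio x, {ω | f ω ≤ y} := by
    ext ω
    simp only [mem_ofPred_eq, mem_iUnion, mem_inter_iff, mem_range, mem_Iio, exists_prop]
    exact ⟨fun hω => ⟨f ω, ⟨⟨ω, rfl⟩, hω⟩, le_rfl⟩,
      fun ⟨y, ⟨_, hy⟩, hωy⟩ => hωy.trans_lt hy⟩
  have heq : {ω | f ω = x} = {ω | f ω ≤ x} \ {ω | f ω < x} := by
    ext ω
    simp [le_antisymm_iff]
  rw [heq, hlt]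
  exact (h x le_rfl).diff <| .biUnion (hf.mono inter_subset_left) fun y hy => h y hy.2.le

lemma measurableSet_genFilt_le (ρ : Ω → ℝ≥0∞) {s : ℝ≥0} {r : ℝ≥0∞} (hr : r ≤ s) :
    MeasurableSet[genFilt ρ s] {ω | ρ ω ≤ r} := by
  lift r to ℝ≥0 using ne_top_of_le_ne_top ENNReal.coe_ne_top hr
  exact MeasurableSpace.measurableSet_generateFrom ⟨r, ENNReal.coe_le_coe.mp hr, rfl⟩

lemma ENNReal.add_le_iff_add_le_add_tsub {a b u x : ℝ≥0∞} (ha : a ≠ ∞) (hu : u ≠ ∞)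
    (hbu : b ≤ u) : b + x ≤ u ↔ a + x ≤ a + (u - b) := by
  rw [ENNReal.add_le_add_iff_left ha,
    ENNReal.le_sub_iff_add_le_left (ne_top_of_le_ne_top hu hbu) hbu]

lemma setOf_add_le_eq_biUnion {σ τ ρ : Ω → ℝ≥0∞} (hστ : ∀ ω, σ ω ≤ τ ω) {u : ℝ≥0∞}
    (hu : u ≠ ∞) :
    {ω | τ ω + ρ ω ≤ u} = ⋃ p ∈ range (fun ω => (σ ω, τ ω)) ∩ {p | p.2 ≤ u},
      {ω | σ ω = p.1} ∩ {ω | τ ω = p.2} ∩ {ω | σ ω + ρ ω ≤ p.1 + (u - p.2)} := by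
  ext ω
  simp only [mem_ofPred_eq, mem_iUnion, mem_inter_iff, mem_range, exists_prop]
  constructor
  · intro h
    have hτu : τ ω ≤ u := le_self_add.trans h
    refine ⟨_, ⟨⟨ω, rfl⟩, hτu⟩, ⟨rfl, rfl⟩, ?_⟩
    exact (ENNReal.add_le_iff_add_le_add_tsub
      (ne_top_of_le_ne_top hu ((hστ ω).trans hτu)) hu hτu).mp h
  · rintro ⟨_, ⟨⟨ω', rfl⟩, hτu⟩, ⟨hσω, hτω⟩, h⟩
    simp only at hτu h hσω hτω
    rw [← hσω, ← hτω] at h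
    rw [← hτω] at hτu
    exact (ENNReal.add_le_iff_add_le_add_tsub
      (ne_top_of_le_ne_top hu ((hστ ω).trans hτu)) hu hτu).mpr h

lemma genFilt_add_le_sup_genFilt_add {𝔄 : ℝ≥0 → MeasurableSpace Ω} (hmono : Monotone 𝔄)
    {σ τ : Ω → ℝ≥0∞} (hσ : IsStoppingTimeE 𝔄 σ) (hτ : IsStoppingTimeE 𝔄 τ)
    (hστ : ∀ ω, σ ω ≤ τ ω) (hσc : (range σ).Countable) (hτc : (range τ).Countable)
    (ρ : Ω → ℝ≥0∞) (s : ℝ≥0) :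
    genFilt (fun ω => τ ω + ρ ω) s ≤ 𝔄 s ⊔ genFilt (fun ω => σ ω + ρ ω) s := by
  refine MeasurableSpace.generateFrom_le ?_
  rintro _ ⟨u, hus, rfl⟩
  rw [setOf_add_le_eq_biUnion hστ ENNReal.coe_ne_top]
  refine .biUnion ((hσc.prod hτc).mono ((range_pair_subset σ τ).trans' inter_subset_left)) ?_
  rintro _ ⟨⟨ω, rfl⟩, hτu⟩
  have hτs : τ ω ≤ s := hτu.trans (ENNReal.coe_le_coe.mpr hus)
  have hσs : σ ω ≤ s := (hστ ω).trans hτs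
  have hσ_eq := measurableSet_eq_of_countable_range hσc fun y hy =>
    hσ.measurableSet_le_of_le hmono (hy.trans hσs)
  have hτ_eq := measurableSet_eq_of_countable_range hτc fun y hy =>
    hτ.measurableSet_le_of_le hmono (hy.trans hτs)
  have hr : σ ω + (u - τ ω) ≤ s :=
    calc σ ω + (u - τ ω) ≤ τ ω + (u - τ ω) := add_le_add_left (hστ ω) _
      _ = u := add_tsub_cancel_of_le hτu
      _ ≤ s := ENNReal.coe_le_coe.mpr hus
  have h𝔄 : 𝔄 s ≤ 𝔄 s ⊔ genFilt (fun ω => σ ω + ρ ω) s := le_sup_left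
  have hgen : genFilt (fun ω => σ ω + ρ ω) s ≤ 𝔄 s ⊔ genFilt (fun ω => σ ω + ρ ω) s :=
    le_sup_right
  exact ((h𝔄 _ hσ_eq).inter (h𝔄 _ hτ_eq)).inter (hgen _ (measurableSet_genFilt_le _ hr))

lemma rcEnlarge_le_rcEnlarge {𝔄 : ℝ≥0 → MeasurableSpace Ω} {ρ ρ' : Ω → ℝ≥0∞}
    (h : ∀ s, genFilt ρ' s ≤ 𝔄 s ⊔ genFilt ρ s) (t : ℝ≥0) :
    rcEnlarge 𝔄 ρ' t ≤ rcEnlarge 𝔄 ρ t :=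
  iInf₂_mono fun s _ => sup_le le_sup_left (h s)

theorem rcEnlarge_antitone_of_le_countable_range_general
    (𝔄 : ℝ≥0 → MeasurableSpace Ω) (hmono : Monotone 𝔄)
    (σ τ : Ω → ℝ≥0∞) (hσ : IsStoppingTimeE 𝔄 σ) (hτ : IsStoppingTimeE 𝔄 τ)
    (hστ : ∀ ω, σ ω ≤ τ ω)
    (hσc : (Set.range σ).Countable) (hτc : (Set.range τ).Countable)
    (ρ : Ω → ℝ≥0∞) (t : ℝ≥0) :
    rcEnlarge 𝔄 (fun ω => τ ω + ρ ω) t ≤ rcEnlarge 𝔄 (fun ω => σ ω + ρ ω) t :=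
  rcEnlarge_le_rcEnlarge (genFilt_add_le_sup_genFilt_add hmono hσ hτ hστ hσc hτc ρ) t

/-- For `𝔄`-stopping times `σ ≤ τ` with countable range and any
`ρ : Ω → [0,∞]`, one has `𝒜^{σ+ρ}_t ⊇ 𝒜^{τ+ρ}_t` for every `t ≥ 0`. -/
theorem rcEnlarge_antitone_of_le_countable_range
    (μ : Measure Ω) [IsProbabilityMeasure μ]
    (𝔄 : ℝ≥0 → MeasurableSpace Ω) (hle : ∀ t, 𝔄 t ≤ m0) (hmono : Monotone 𝔄)
    (σ τ : Ω → ℝ≥0∞) (hσ : IsStoppingTimeE 𝔄 σ) (hτ : IsStoppingTimeE 𝔄 τ)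
    (hστ : ∀ ω, σ ω ≤ τ ω)
    (hσc : (Set.range σ).Countable) (hτc : (Set.range τ).Countable)
    (ρ : Ω → ℝ≥0∞) (t : ℝ≥0) :
    rcEnlarge 𝔄 (fun ω => τ ω + ρ ω) t ≤ rcEnlarge 𝔄 (fun ω => σ ω + ρ ω) t :=
  rcEnlarge_antitone_of_le_countable_range_general 𝔄 hmono σ τ hσ hτ hστ hσc hτc ρ t

end
end

section
/- Let τ be an 𝔉-stopping time, λ ≥ 0, and (τ₂,…,τ_n) ∈ 𝒮^{n−1}_{τ+δ₁}(Lδ, 𝔉^{τ+δ₁}). Then the tuple (τ₂ 1_{{τ=λ}} + (λ+δ₁) 1_{{τ≠λ}}, …, τ_n 1_{{τ=λ}} + (λ+δ₁+⋯+δ_{n−1}) 1_{{τ≠λ}}) belongs to 𝒮^{n−1}_{λ+δ₁}(Lδ, 𝔉^{λ+δ₁}). -/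
/-!
On `E = {τ = λ}`, an event of `𝓕_λ`, the new tuple coincides with the old one, and the random
times `τ + δ₁, τ₂ + δ₂, …` generating the old tower of enlarged filtrations coincide with the
times `λ + δ₁, …` generating the new one. Hence, from time `λ` on, the trace on `E` of every
filtration of the old tower is contained in the corresponding filtration of the new tower, which
transfers the stopping-time property on `E`. Off `E` the new times are `λ + δ₁ + ⋯ + δ_i`, i.e.
the previous new time plus the next waiting time, and this is a stopping time of the enlarged
filtration by construction. All new times are `≥ λ`, so nothing happens before time `λ`.
-/

open MeasureTheory Set Filter
open scoped ENNReal NNReal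

noncomputable section

variable {Ω : Type*}

variable {m0 : MeasurableSpace Ω}

theorem measurableSet_rcEnlarge_iff {𝔄 : ℝ≥0 → MeasurableSpace Ω} {ρ : Ω → ℝ≥0∞} {t : ℝ≥0}
    {A : Set Ω} :
    MeasurableSet[rcEnlarge 𝔄 ρ t] A ↔ ∀ s, t < s → MeasurableSet[𝔄 s ⊔ genFilt ρ s] A := by
  rw [rcEnlarge]
  simp only [MeasurableSpace.measurableSet_iInf, mem_Ioi]

theorem isStoppingTimeE_rcEnlarge (𝔄 : ℝ≥0 → MeasurableSpace Ω) (ρ : Ω → ℝ≥0∞) :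
    IsStoppingTimeE (rcEnlarge 𝔄 ρ) ρ := fun t =>
  le_iInf₂ (fun _ hs => (genFilt_mono ρ (le_of_lt hs)).trans le_sup_right) _
    (MeasurableSpace.measurableSet_generateFrom ⟨t, le_rfl, rfl⟩)

theorem IsStoppingTimeE.measurableSet_lt_coe {𝔉 : ℝ≥0 → MeasurableSpace Ω} (hmono : Monotone 𝔉)
    {τ : Ω → ℝ≥0∞} (hτ : IsStoppingTimeE 𝔉 τ) (l : ℝ≥0) :
    MeasurableSet[𝔉 l] {ω | τ ω < l} := by
  have hunion : {ω | τ ω < l} =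
      ⋃ q : {q : ℚ // (Real.toNNReal q : ℝ≥0∞) < l}, {ω | τ ω ≤ Real.toNNReal q} := by
    ext ω
    simp only [mem_ofPred_eq, mem_iUnion]
    constructor
    · intro hω
      obtain ⟨q, -, hτq, hql⟩ := ENNReal.lt_iff_exists_rat_btwn.mp hω
      exact ⟨⟨q, hql⟩, hτq.le⟩
    · rintro ⟨q, hτq⟩
      exact hτq.trans_lt q.2
  rw [hunion]
  exact MeasurableSet.iUnion fun q => hmono (ENNReal.coe_le_coe.mp q.2.le) _ (hτ _)

theorem IsStoppingTimeE.measurableSet_eq_coe {𝔉 : ℝ≥0 → MeasurableSpace Ω} (hmono : Monotone 𝔉)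
    {τ : Ω → ℝ≥0∞} (hτ : IsStoppingTimeE 𝔉 τ) (l : ℝ≥0) :
    MeasurableSet[𝔉 l] {ω | τ ω = l} := by
  have hdiff : {ω | τ ω = l} = {ω | τ ω ≤ l} \ {ω | τ ω < l} := by
    ext ω
    simp only [mem_ofPred_eq, Set.mem_sdiff, not_lt, le_antisymm_iff]
  rw [hdiff]
  exact (hτ l).diff (hτ.measurableSet_lt_coe hmono l)

def traceSpace (m : MeasurableSpace Ω) {E : Set Ω} (hE : MeasurableSet[m] E) :
    MeasurableSpace Ω where
  MeasurableSet' A := MeasurableSet[m] (E ∩ A)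
  measurableSet_empty := by simp
  measurableSet_compl A hA := by
    have hdiff : E ∩ Aᶜ = E \ (E ∩ A) := by rw [sdiff_self_inter, sdiff_eq]
    simpa only [hdiff] using hE.diff hA
  measurableSet_iUnion f hf := by
    simpa only [inter_iUnion] using MeasurableSet.iUnion hf

def TraceLeFrom (E : Set Ω) (l : ℝ≥0) (M N : ℝ≥0 → MeasurableSpace Ω) : Prop :=
  ∀ t, l ≤ t → ∀ A, MeasurableSet[M t] A → MeasurableSet[N t] (E ∩ A)

namespace TraceLeFrom

variable {E : Set Ω} {l : ℝ≥0} {M N : ℝ≥0 → MeasurableSpace Ω}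

theorem measurableSet (h : TraceLeFrom E l M N) {t : ℝ≥0} (ht : l ≤ t) :
    MeasurableSet[N t] E := by
  simpa using h t ht univ MeasurableSet.univ

theorem of_measurableSet {𝔉 : ℝ≥0 → MeasurableSpace Ω} (hmono : Monotone 𝔉)
    (hE : MeasurableSet[𝔉 l] E) : TraceLeFrom E l 𝔉 𝔉 := fun _ ht _ hA =>
  (hmono ht _ hE).inter hA

theorem rcEnlarge (h : TraceLeFrom E l M N) {ρ' ρ : Ω → ℝ≥0∞} (hagree : ∀ ω ∈ E, ρ' ω = ρ ω) :
    TraceLeFrom E l (_root_.rcEnlarge M ρ') (_root_.rcEnlarge N ρ) := by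
  intro t ht A hA
  rw [measurableSet_rcEnlarge_iff] at hA ⊢
  intro s hts
  have hls : l ≤ s := ht.trans hts.le
  have hE : MeasurableSet[N s ⊔ genFilt ρ s] E := le_sup_left (a := N s) _ (h.measurableSet hls)
  suffices hle : M s ⊔ genFilt ρ' s ≤ traceSpace _ hE from hle _ (hA s hts)
  refine sup_le (fun B hB => le_sup_left (a := N s) _ (h s hls B hB)) ?_
  refine MeasurableSpace.generateFrom_le ?_
  rintro _ ⟨u, hu, rfl⟩
  have hEq : E ∩ {ω | ρ' ω ≤ u} = E ∩ {ω | ρ ω ≤ u} := by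
    ext ω
    simp only [mem_inter_iff, mem_ofPred_eq]
    exact and_congr_right fun hω => by rw [hagree ω hω]
  change MeasurableSet[N s ⊔ genFilt ρ s] (E ∩ {ω | ρ' ω ≤ u})
  rw [hEq]
  exact hE.inter (le_sup_right (a := N s) _
    (MeasurableSpace.measurableSet_generateFrom ⟨u, hu, rfl⟩))

theorem enrichedFilt (h : TraceLeFrom E l M N) {ρ' ρ : ℕ → Ω → ℝ≥0∞}
    (hagree : ∀ j, ∀ ω ∈ E, ρ' j ω = ρ j ω) :
    ∀ m, TraceLeFrom E l (_root_.enrichedFilt M ρ' m) (_root_.enrichedFilt N ρ m)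
  | 0 => h
  | m + 1 => (h.enrichedFilt hagree m).rcEnlarge (hagree m)

end TraceLeFrom

theorem IsStoppingTimeE.ite {N : ℝ≥0 → MeasurableSpace Ω} {P : Ω → Prop} [DecidablePred P]
    {ρ₁ ρ₂ ρ : Ω → ℝ≥0∞} {l : ℝ≥0}
    (hl : ∀ ω, (l : ℝ≥0∞) ≤ if P ω then ρ₁ ω else ρ₂ ω)
    (hP : ∀ t, l ≤ t → MeasurableSet[N t] {ω | P ω})
    (h₁ : ∀ t, l ≤ t → MeasurableSet[N t] ({ω | P ω} ∩ {ω | ρ₁ ω ≤ t}))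
    (hρ : IsStoppingTimeE N ρ) (h₂ : ∀ ω, ¬P ω → ρ₂ ω = ρ ω) :
    IsStoppingTimeE N fun ω => if P ω then ρ₁ ω else ρ₂ ω := by
  intro t
  rcases lt_or_ge t l with htl | hlt
  · have hempty : {ω | (if P ω then ρ₁ ω else ρ₂ ω) ≤ t} = ∅ :=
      eq_empty_of_forall_notMem fun ω hω =>
        (hl ω).not_gt (hω.trans_lt (ENNReal.coe_lt_coe.mpr htl))
    exact hempty ▸ (N t).measurableSet_empty
  · have hsplit : {ω | (if P ω then ρ₁ ω else ρ₂ ω) ≤ t} =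
        ({ω | P ω} ∩ {ω | ρ₁ ω ≤ t}) ∪ ({ω | P ω}ᶜ ∩ {ω | ρ ω ≤ t}) := by
      ext ω
      by_cases hω : P ω <;> simp [hω, h₂]
    rw [hsplit]
    exact (h₁ t hlt).union ((hP t hlt).compl.inter (hρ t))

theorem le_apply_succ_of_chain {σ : Ω → ℝ≥0∞} {τ δ : ℕ → Ω → ℝ≥0∞} {n : ℕ}
    (h₀ : ∀ ω, σ ω ≤ τ 0 ω) (hstep : ∀ i, i + 1 < n → ∀ ω, τ i ω + δ i ω ≤ τ (i + 1) ω) :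
    ∀ i, i + 1 < n → ∀ ω, σ ω ≤ τ (i + 1) ω
  | 0, hi, ω => (h₀ ω).trans (le_self_add.trans (hstep 0 hi ω))
  | i + 1, hi, ω =>
    (le_apply_succ_of_chain h₀ hstep i (by omega) ω).trans (le_self_add.trans (hstep _ hi ω))

theorem strategy_transfer_to_constant_time_general
    (𝔉 : ℝ≥0 → MeasurableSpace Ω) (hmono : Monotone 𝔉)
    (n : ℕ) (δ : ℕ → Ω → ℝ≥0∞)
    (τ : Ω → ℝ≥0∞) (hτ : IsStoppingTimeE 𝔉 τ) (l : ℝ≥0)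
    (p : ℕ → Ω → ℝ≥0∞)
    (hp : IsStrategy (rcEnlarge 𝔉 (fun ω => τ ω + δ 0 ω)) (fun i => δ (i + 1)) (n - 1)
      (fun ω => τ ω + δ 0 ω) p) :
    IsStrategy (rcEnlarge 𝔉 (fun ω => (l : ℝ≥0∞) + δ 0 ω)) (fun i => δ (i + 1)) (n - 1)
      (fun ω => (l : ℝ≥0∞) + δ 0 ω)
      (fun j ω => if τ ω = (l : ℝ≥0∞) then p j ω
        else (l : ℝ≥0∞) + ∑ k ∈ Finset.range (j + 1), δ k ω) := by
  set q : ℕ → Ω → ℝ≥0∞ := fun j ω => if τ ω = l then p j ω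
    else l + ∑ k ∈ Finset.range (j + 1), δ k ω
  have htrace := (TraceLeFrom.of_measurableSet hmono (hτ.measurableSet_eq_coe hmono l)).rcEnlarge
    (ρ' := fun ω => τ ω + δ 0 ω) (ρ := fun ω => l + δ 0 ω) (by simp +contextual)
    |>.enrichedFilt (ρ' := fun j ω => p j ω + δ (j + 1) ω) (ρ := fun j ω => q j ω + δ (j + 1) ω)
      (by simp +contextual [q])
  have hq₀ : ∀ ω, l + δ 0 ω ≤ q 0 ω := fun ω => by
    by_cases hω : τ ω = l
    · simpa [q, hω] using hp.2.1 ω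
    · simp [q, hω]
  have hqstep : ∀ i, i + 1 < n - 1 → ∀ ω, q i ω + δ (i + 1) ω ≤ q (i + 1) ω := fun i hi ω => by
    by_cases hω : τ ω = l
    · simpa [q, hω] using (hp.2.2 i hi).2 ω
    · simp [q, hω, Finset.sum_range_succ _ (i + 1), add_assoc]
  refine ⟨?_, hq₀, fun i hi => ⟨?_, hqstep i hi⟩⟩
  · exact IsStoppingTimeE.ite (fun ω => le_self_add.trans (hq₀ ω))
      (fun _ ht => (htrace 0).measurableSet ht) (fun t ht => htrace 0 t ht _ (hp.1 t))
      (isStoppingTimeE_rcEnlarge _ _) (by simp)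
  · have hql : ∀ ω, (l : ℝ≥0∞) ≤ q (i + 1) ω := fun ω =>
      le_self_add.trans (le_apply_succ_of_chain hq₀ hqstep i hi ω)
    exact IsStoppingTimeE.ite hql (fun _ ht => (htrace (i + 1)).measurableSet ht)
      (fun t ht => htrace (i + 1) t ht _ ((hp.2.2 i hi).1 t)) (isStoppingTimeE_rcEnlarge _ _)
      (by simp +contextual [q, Finset.sum_range_succ _ (i + 1), add_assoc])

/-- If `τ` is an `𝔉`-stopping time, `λ ≥ 0` and
`(τ₂,…,τ_n) ∈ 𝒮^{n-1}_{τ+δ₁}(Lδ, 𝔉^{τ+δ₁})`, then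
`(τ₂ 1_{τ=λ} + (λ+δ₁) 1_{τ≠λ}, …, τ_n 1_{τ=λ} + (λ+δ₁+⋯+δ_{n-1}) 1_{τ≠λ})`
belongs to `𝒮^{n-1}_{λ+δ₁}(Lδ, 𝔉^{λ+δ₁})`. -/
theorem strategy_transfer_to_constant_time
    (μ : Measure Ω) [IsProbabilityMeasure μ]
    (𝔉 : ℝ≥0 → MeasurableSpace Ω) (hle : ∀ t, 𝔉 t ≤ m0) (hmono : Monotone 𝔉)
    (hrc : RightContinuousFilt 𝔉)
    (hnull : ∀ A : Set Ω, μ A = 0 → MeasurableSet[𝔉 0] A)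
    (n : ℕ) (hn : 2 ≤ n) (δ : ℕ → Ω → ℝ≥0∞)
    (hδfin : ∀ i, i + 1 < n → ∀ᵐ ω ∂μ, δ i ω < ∞)
    (τ : Ω → ℝ≥0∞) (hτ : IsStoppingTimeE 𝔉 τ) (l : ℝ≥0)
    (p : ℕ → Ω → ℝ≥0∞)
    (hp : IsStrategy (rcEnlarge 𝔉 (fun ω => τ ω + δ 0 ω)) (fun i => δ (i + 1)) (n - 1)
      (fun ω => τ ω + δ 0 ω) p) :
    IsStrategy (rcEnlarge 𝔉 (fun ω => (l : ℝ≥0∞) + δ 0 ω)) (fun i => δ (i + 1)) (n - 1)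
      (fun ω => (l : ℝ≥0∞) + δ 0 ω)
      (fun j ω => if τ ω = (l : ℝ≥0∞) then p j ω
        else (l : ℝ≥0∞) + ∑ k ∈ Finset.range (j + 1), δ k ω) :=
  strategy_transfer_to_constant_time_general 𝔉 hmono n δ τ hτ l p hp
end
end

section
/- Let τ be an 𝔉-stopping time, c ≥ 0, and (τ₂,…,τ_n) ∈ 𝒮^{n−1}_{τ+δ₁}(Lδ, 𝔉^{τ+δ₁}). Then (τ₂+c, …, τ_n+c) ∈ 𝒮^{n−1}_{τ+c+δ₁}(Lδ, 𝔉^{τ+c+δ₁}). -/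
/-!
Delaying every random time by the constant `c` delays all the generated information by `c`:
`{ρ ≤ u} = {ρ + c ≤ u + c}`, so `𝒢^ρ_s ⊆ 𝒢^{ρ+c}_{s+c}`, and since `𝔉` is increasing this
propagates through every right-continuous enlargement. Hence a stopping time of the original
enlarged filtration becomes, after adding `c`, a stopping time of the delayed one, while the
order constraints between consecutive exercise times are invariant under the shift.
-/

open MeasureTheory Set Filter
open scoped ENNReal NNReal

noncomputable section

variable {Ω : Type*}

variable {m0 : MeasurableSpace Ω}

lemma genFilt_le_genFilt_add_const (ρ : Ω → ℝ≥0∞) (c : ℝ≥0) {s s' : ℝ≥0} (h : s + c ≤ s') :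
    genFilt ρ s ≤ genFilt (fun ω => ρ ω + c) s' := by
  apply MeasurableSpace.generateFrom_mono
  rintro A ⟨u, hu, rfl⟩
  refine ⟨u + c, le_trans (by gcongr) h, ?_⟩
  ext ω
  simp only [Set.mem_ofPred_eq, ENNReal.coe_add,
    ENNReal.add_le_add_iff_right ENNReal.coe_ne_top]

section DelayedFiltration

variable {𝔄 𝔅 : ℝ≥0 → MeasurableSpace Ω} (c : ℝ≥0) (h : ∀ s, 𝔄 s ≤ 𝔅 (s + c))
include h

lemma rcEnlarge_le_rcEnlarge_add_const (ρ : Ω → ℝ≥0∞) (t : ℝ≥0) :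
    rcEnlarge 𝔄 ρ t ≤ rcEnlarge 𝔅 (fun ω => ρ ω + c) (t + c) := by
  refine le_iInf₂ fun s' (hs' : t + c < s') => ?_
  have hshift : s' - c + c = s' := tsub_add_cancel_of_le (le_add_self.trans hs'.le)
  refine (iInf₂_le (s' - c) (lt_tsub_iff_right.mpr hs')).trans (sup_le_sup ?_ ?_)
  · exact (h (s' - c)).trans_eq (by rw [hshift])
  · exact genFilt_le_genFilt_add_const ρ c hshift.le

lemma enrichedFilt_le_enrichedFilt_add_const (ρ : ℕ → Ω → ℝ≥0∞) :
    ∀ i t, enrichedFilt 𝔄 ρ i t ≤ enrichedFilt 𝔅 (fun j ω => ρ j ω + c) i (t + c)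
  | 0, t => h t
  | i + 1, t => rcEnlarge_le_rcEnlarge_add_const c
      (fun s => enrichedFilt_le_enrichedFilt_add_const ρ i s) (ρ i) t

lemma IsStoppingTimeE.add_const {ν : Ω → ℝ≥0∞} (hν : IsStoppingTimeE 𝔄 ν) :
    IsStoppingTimeE 𝔅 (fun ω => ν ω + c) := by
  intro t
  rcases le_or_gt c t with hct | htc
  · have hsub : ((t - c : ℝ≥0) : ℝ≥0∞) = t - c := ENNReal.coe_sub
    have heq : {ω | ν ω + c ≤ (t : ℝ≥0∞)} = {ω | ν ω ≤ ((t - c : ℝ≥0) : ℝ≥0∞)} := by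
      ext ω
      rw [Set.mem_ofPred_eq, Set.mem_ofPred_eq, hsub,
        ENNReal.le_sub_iff_add_le_right ENNReal.coe_ne_top (by exact_mod_cast hct)]
    rw [heq]
    have hle : 𝔄 (t - c) ≤ 𝔅 t := (h (t - c)).trans_eq (by rw [tsub_add_cancel_of_le hct])
    exact hle _ (hν (t - c))
  · have hempty : {ω | ν ω + c ≤ (t : ℝ≥0∞)} = ∅ :=
      Set.eq_empty_of_forall_notMem fun ω (hω : ν ω + c ≤ (t : ℝ≥0∞)) =>
        (le_add_self.trans hω).not_gt (ENNReal.coe_lt_coe.mpr htc)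
    rw [hempty]
    exact @MeasurableSet.empty _ (𝔅 t)

lemma IsStrategy.add_const {δ : ℕ → Ω → ℝ≥0∞} {n : ℕ} {σ : Ω → ℝ≥0∞}
    {p : ℕ → Ω → ℝ≥0∞} (hp : IsStrategy 𝔄 δ n σ p) :
    IsStrategy 𝔅 δ n (fun ω => σ ω + c) (fun j ω => p j ω + c) := by
  obtain ⟨hfirst, hσ, hnext⟩ := hp
  have hdelay : (fun j ω => p j ω + (c : ℝ≥0∞) + δ j ω)
      = fun j ω => p j ω + δ j ω + c := by
    funext j ω
    exact add_right_comm _ _ _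
  refine ⟨hfirst.add_const c h, fun ω => add_le_add_left (hσ ω) _,
    fun i hi => ⟨?_, fun ω => ?_⟩⟩
  · rw [hdelay]
    exact (hnext i hi).1.add_const c
      (enrichedFilt_le_enrichedFilt_add_const c h (fun j ω => p j ω + δ j ω) (i + 1))
  · rw [add_right_comm]
    exact add_le_add_left ((hnext i hi).2 ω) _

end DelayedFiltration

theorem strategy_shift_by_constant_general
    (𝔉 : ℝ≥0 → MeasurableSpace Ω) (hmono : Monotone 𝔉)
    (n : ℕ) (δ : ℕ → Ω → ℝ≥0∞)
    (τ : Ω → ℝ≥0∞) (c : ℝ≥0)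
    (p : ℕ → Ω → ℝ≥0∞)
    (hp : IsStrategy (rcEnlarge 𝔉 (fun ω => τ ω + δ 0 ω)) (fun i => δ (i + 1)) (n - 1)
      (fun ω => τ ω + δ 0 ω) p) :
    IsStrategy (rcEnlarge 𝔉 (fun ω => τ ω + (c : ℝ≥0∞) + δ 0 ω)) (fun i => δ (i + 1)) (n - 1)
      (fun ω => τ ω + (c : ℝ≥0∞) + δ 0 ω)
      (fun j ω => p j ω + (c : ℝ≥0∞)) := by
  have hstart : (fun ω => τ ω + (c : ℝ≥0∞) + δ 0 ω) = fun ω => τ ω + δ 0 ω + c := by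
    funext ω
    exact add_right_comm _ _ _
  rw [hstart]
  exact hp.add_const c
    (rcEnlarge_le_rcEnlarge_add_const c (fun s => hmono le_self_add) _)

/-- If `τ` is an `𝔉`-stopping time, `c ≥ 0` and
`(τ₂,…,τ_n) ∈ 𝒮^{n-1}_{τ+δ₁}(Lδ, 𝔉^{τ+δ₁})`, then
`(τ₂+c,…,τ_n+c) ∈ 𝒮^{n-1}_{τ+c+δ₁}(Lδ, 𝔉^{τ+c+δ₁})`. -/
theorem strategy_shift_by_constant
    (μ : Measure Ω) [IsProbabilityMeasure μ]
    (𝔉 : ℝ≥0 → MeasurableSpace Ω) (hle : ∀ t, 𝔉 t ≤ m0) (hmono : Monotone 𝔉)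
    (hrc : RightContinuousFilt 𝔉)
    (hnull : ∀ A : Set Ω, μ A = 0 → MeasurableSet[𝔉 0] A)
    (n : ℕ) (hn : 2 ≤ n) (δ : ℕ → Ω → ℝ≥0∞)
    (hδfin : ∀ i, i + 1 < n → ∀ᵐ ω ∂μ, δ i ω < ∞)
    (τ : Ω → ℝ≥0∞) (hτ : IsStoppingTimeE 𝔉 τ) (c : ℝ≥0)
    (p : ℕ → Ω → ℝ≥0∞)
    (hp : IsStrategy (rcEnlarge 𝔉 (fun ω => τ ω + δ 0 ω)) (fun i => δ (i + 1)) (n - 1)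
      (fun ω => τ ω + δ 0 ω) p) :
    IsStrategy (rcEnlarge 𝔉 (fun ω => τ ω + (c : ℝ≥0∞) + δ 0 ω)) (fun i => δ (i + 1)) (n - 1)
      (fun ω => τ ω + (c : ℝ≥0∞) + δ 0 ω)
      (fun j ω => p j ω + (c : ℝ≥0∞)) :=
  strategy_shift_by_constant_general 𝔉 hmono n δ τ c p hp

end
end

section
/- For every 𝔉-stopping time σ: (i) Z_n^{δ,𝔉}(σ)_disc ≤ Z_n^{δ,𝔉}(σ) a.s.; (ii) if δ₁,…,δ_{n−1} are 𝔉-stopping times, then Z_n^{δ,𝔉}(σ)_disc = Z_n^{δ,𝔉}(σ) a.s. -/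
open MeasureTheory Set Filter
open scoped ENNReal NNReal

noncomputable section

variable {Ω : Type*}

variable {m0 : MeasurableSpace Ω}

/-!
When the waiting times `δᵢ` are stopping times, all enlarged filtrations `𝔉^{τ₁+δ₁,…}` collapse
to `𝔉` (a sum of stopping times of a right-continuous filtration is a stopping time), so a
strategy is just a chain of `𝔉`-stopping times. Rounding `τ₁` up to the grid `ℕ/(m+1)` and
pushing each later time up just enough to stay admissible gives strategies `τᵐ` with countably
valued first time and `τ ≤ τᵐ ≤ τ + 1/(m+1)`. By right-continuity of `Y` and dominated
convergence (with dominating function `n · sup_t Y(t)`), `Σ Y(τᵐᵢ) → Σ Y(τᵢ)` in `L¹`, hence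
so do the conditional expectations given `𝓕_σ`, and along an a.e. convergent subsequence the
bounds `𝔼(Σ Y(τᵐᵢ) | 𝓕_σ) ≤ Z_disc` pass to the limit.
-/

open Topology

namespace NNReal

def gridCeil (m : ℕ) (t : ℝ≥0) : ℝ≥0 := ⌈t * (m + 1)⌉₊ / (m + 1)

def gridFloor (m : ℕ) (t : ℝ≥0) : ℝ≥0 := ⌊t * (m + 1)⌋₊ / (m + 1)

lemma le_gridCeil (m : ℕ) (t : ℝ≥0) : t ≤ gridCeil m t := by
  rw [gridCeil, le_div_iff₀ (by positivity)]
  exact Nat.le_ceil _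

lemma gridCeil_le_add (m : ℕ) (t : ℝ≥0) : gridCeil m t ≤ t + ((m : ℝ≥0) + 1)⁻¹ := by
  rw [gridCeil, div_le_iff₀ (by positivity), add_mul, inv_mul_cancel₀ (by positivity)]
  exact (Nat.ceil_lt_add_one zero_le).le

lemma gridFloor_le (m : ℕ) (t : ℝ≥0) : gridFloor m t ≤ t := by
  rw [gridFloor, div_le_iff₀ (by positivity)]
  exact Nat.floor_le zero_le

lemma gridCeil_le_iff (m : ℕ) (s t : ℝ≥0) : gridCeil m s ≤ t ↔ s ≤ gridFloor m t := by
  rw [gridCeil, gridFloor, div_le_iff₀ (by positivity), le_div_iff₀ (by positivity),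
    ← Nat.le_floor_iff zero_le, Nat.ceil_le]

lemma tendsto_gridCeil (t : ℝ≥0) : Tendsto (gridCeil · t) atTop (𝓝[≥] t) := by
  have hmesh : Tendsto (fun m : ℕ => t + ((m : ℝ≥0) + 1)⁻¹) atTop (𝓝 t) := by
    simpa [one_div] using
      tendsto_const_nhds.add (tendsto_one_div_add_atTop_nhds_zero_nat (𝕜 := ℝ≥0))
  refine tendsto_nhdsWithin_iff.2 ⟨?_, .of_forall fun m => le_gridCeil m t⟩
  exact tendsto_of_tendsto_of_tendsto_of_le_of_le tendsto_const_nhds hmesh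
    (le_gridCeil · t) (gridCeil_le_add · t)

end NNReal

namespace ENNReal

def gridCeil (m : ℕ) (x : ℝ≥0∞) : ℝ≥0∞ := if x = ∞ then ∞ else NNReal.gridCeil m x.toNNReal

lemma le_gridCeil (m : ℕ) (x : ℝ≥0∞) : x ≤ gridCeil m x := by
  induction x with
  | top => simp [gridCeil]
  | coe t => simpa [gridCeil] using NNReal.le_gridCeil m t

lemma gridCeil_le_add (m : ℕ) (x : ℝ≥0∞) : gridCeil m x ≤ x + ((m : ℝ≥0∞) + 1)⁻¹ := by
  induction x with
  | top => simp [gridCeil]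
  | coe t =>
    have h := coe_le_coe.2 (NNReal.gridCeil_le_add m t)
    rw [coe_add, coe_inv (Nat.cast_add_one_ne_zero m)] at h
    simpa [gridCeil] using h

lemma gridCeil_le_coe_iff (m : ℕ) (x : ℝ≥0∞) (t : ℝ≥0) :
    gridCeil m x ≤ t ↔ x ≤ NNReal.gridFloor m t := by
  induction x with
  | top => simp [gridCeil]
  | coe s => simpa [gridCeil] using NNReal.gridCeil_le_iff m s t

lemma countable_range_gridCeil (m : ℕ) : (range (gridCeil m)).Countable := by
  refine ((countable_range fun k : ℕ => ((k / (m + 1) : ℝ≥0) : ℝ≥0∞)).insert ∞).mono ?_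
  rintro _ ⟨x, rfl⟩
  by_cases hx : x = ∞
  · simp [gridCeil, hx]
  · exact .inr ⟨⌈x.toNNReal * (m + 1)⌉₊, by simp [gridCeil, hx, NNReal.gridCeil]⟩

lemma tendsto_of_le_of_le_add_inv {a : ℝ≥0∞} {b : ℕ → ℝ≥0∞} (h₁ : ∀ m, a ≤ b m)
    (h₂ : ∀ m, b m ≤ a + ((m : ℝ≥0∞) + 1)⁻¹) : Tendsto b atTop (𝓝 a) := by
  have hmesh : Tendsto (fun m : ℕ => a + ((m : ℝ≥0∞) + 1)⁻¹) atTop (𝓝 a) := by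
    simpa using tendsto_const_nhds.add
      (ENNReal.tendsto_inv_nat_nhds_zero.comp (tendsto_add_atTop_nat 1))
  exact tendsto_of_tendsto_of_tendsto_of_le_of_le tendsto_const_nhds hmesh h₁ h₂

lemma eq_top_iff_of_le_of_le_add {a b c : ℝ≥0∞} (h₁ : a ≤ b) (h₂ : b ≤ a + c) (hc : c ≠ ∞) :
    b = ∞ ↔ a = ∞ := by
  refine ⟨fun hb => ?_, fun ha => top_le_iff.1 (ha ▸ h₁)⟩
  rw [hb, top_le_iff, add_eq_top] at h₂
  exact h₂.resolve_right hc

end ENNReal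

namespace MeasureTheory

variable {f : Filtration ℝ≥0 m0}

lemma Filtration.isRightContinuous_of_rightContinuousFilt (h : RightContinuousFilt f) :
    f.IsRightContinuous :=
  ⟨fun t => (f.rightCont_eq t).trans_le (h t).ge⟩

lemma IsStoppingTime.add_of_isRightContinuous [f.IsRightContinuous] {τ π : Ω → ℝ≥0∞}
    (hτ : IsStoppingTime f τ) (hπ : IsStoppingTime f π) :
    IsStoppingTime f fun ω => τ ω + π ω := by
  refine isStoppingTime_of_measurableSet_lt_of_isRightContinuous fun u => ?_
  show MeasurableSet[f u] {ω | τ ω + π ω < (u : ℝ≥0∞)}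
  -- a rational `q` separates `τ ω` from `u - π ω`
  have hsplit : {ω | τ ω + π ω < (u : ℝ≥0∞)} = ⋃ q : ℚ, ⋃ (_ : Real.toNNReal q < u),
      {ω | τ ω < Real.toNNReal q} ∩ {ω | π ω < ((u - Real.toNNReal q : ℝ≥0) : ℝ≥0∞)} := by
    ext ω
    simp only [mem_ofPred_eq, mem_iUnion, mem_inter_iff, exists_prop]
    constructor
    · intro h
      obtain ⟨q, -, hτq, hqu⟩ := ENNReal.lt_iff_exists_rat_btwn.1 (lt_tsub_iff_right.2 h)
      have hqu' : Real.toNNReal q < u := ENNReal.coe_lt_coe.1 (hqu.trans_le tsub_le_self)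
      refine ⟨q, hqu', hτq, ?_⟩
      rw [ENNReal.coe_sub, lt_tsub_iff_left]
      exact lt_tsub_iff_right.1 hqu
    · rintro ⟨q, hq, hτq, hπq⟩
      calc τ ω + π ω < Real.toNNReal q + ((u - Real.toNNReal q : ℝ≥0) : ℝ≥0∞) :=
            ENNReal.add_lt_add hτq hπq
        _ = u := by rw [← ENNReal.coe_add, add_tsub_cancel_of_le hq.le]
  rw [hsplit]
  exact .iUnion fun q => .iUnion fun hq =>
    (f.mono hq.le _ (hτ.measurableSet_lt _)).inter (f.mono tsub_le_self _ (hπ.measurableSet_lt _))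

lemma IsStoppingTime.gridCeil {τ : Ω → ℝ≥0∞} (hτ : IsStoppingTime f τ) (m : ℕ) :
    IsStoppingTime f fun ω => ENNReal.gridCeil m (τ ω) := by
  intro t
  show MeasurableSet[f t] {ω | ENNReal.gridCeil m (τ ω) ≤ (t : ℝ≥0∞)}
  simp_rw [ENNReal.gridCeil_le_coe_iff]
  exact f.mono (NNReal.gridFloor_le m t) _ (hτ _)

end MeasureTheory

section Strategy

variable {f : Filtration ℝ≥0 m0} [f.IsRightContinuous] {δ : ℕ → Ω → ℝ≥0∞} {n : ℕ}
  {σ : Ω → ℝ≥0∞} {τ : ℕ → Ω → ℝ≥0∞}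

lemma rcEnlarge_eq_self {ρ : Ω → ℝ≥0∞} (hρ : IsStoppingTime f ρ) :
    rcEnlarge f ρ = f := by
  have hgen : ∀ s, genFilt ρ s ≤ f s := fun s =>
    MeasurableSpace.generateFrom_le fun _ ⟨r, hr, hA⟩ => hA ▸ f.mono hr _ (hρ r)
  funext t
  simp_rw [rcEnlarge, sup_eq_left.2 (hgen _)]
  exact (f.rightCont_eq t).symm.trans (by rw [Filtration.IsRightContinuous.eq])

lemma enrichedFilt_eq_self {ρ : ℕ → Ω → ℝ≥0∞} {i : ℕ}
    (hρ : ∀ j < i, IsStoppingTime f (ρ j)) : enrichedFilt f ρ i = f := by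
  induction i with
  | zero => rfl
  | succ i ih =>
    rw [enrichedFilt, ih fun j hj => hρ j (hj.trans i.lt_succ_self)]
    exact rcEnlarge_eq_self (hρ i i.lt_succ_self)

lemma enrichedFilt_add_eq_self (hδ : ∀ i, i + 1 < n → IsStoppingTime f (δ i)) {i : ℕ}
    (hi : i + 1 < n) (hτ : ∀ j ≤ i, IsStoppingTime f (τ j)) :
    enrichedFilt f (fun j ω => τ j ω + δ j ω) (i + 1) = f :=
  enrichedFilt_eq_self fun j hj =>
    (hτ j (Nat.le_of_lt_succ hj)).add_of_isRightContinuous (hδ j (by omega))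

lemma IsStrategy.isStoppingTime (hτ : IsStrategy f δ n σ τ)
    (hδ : ∀ i, i + 1 < n → IsStoppingTime f (δ i)) (i : ℕ) (hi : i < n) :
    IsStoppingTime f (τ i) := by
  induction i using Nat.strong_induction_on with
  | _ i ih =>
    cases i with
    | zero => exact hτ.1
    | succ i =>
      have h := (hτ.2.2 i hi).1
      rwa [enrichedFilt_add_eq_self hδ hi fun j hj => ih j (by omega) (by omega)] at h

lemma isStrategy_of_isStoppingTime (hδ : ∀ i, i + 1 < n → IsStoppingTime f (δ i))
    (hτ₀ : IsStoppingTime f (τ 0)) (hστ : ∀ ω, σ ω ≤ τ 0 ω)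
    (hτ : ∀ i, i + 1 < n → IsStoppingTime f (τ (i + 1)) ∧ ∀ ω, τ i ω + δ i ω ≤ τ (i + 1) ω) :
    IsStrategy f δ n σ τ := by
  have hstop : ∀ i, i < n → IsStoppingTime f (τ i)
    | 0, _ => hτ₀
    | i + 1, hi => (hτ i hi).1
  refine ⟨hτ₀, hστ, fun i hi => ⟨?_, (hτ i hi).2⟩⟩
  rw [enrichedFilt_add_eq_self hδ hi fun j hj => hstop j (by omega)]
  exact (hτ i hi).1

end Strategy

section Discretize

def discretize (m : ℕ) (τ δ : ℕ → Ω → ℝ≥0∞) : ℕ → Ω → ℝ≥0∞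
  | 0 => fun ω => ENNReal.gridCeil m (τ 0 ω)
  | i + 1 => fun ω => max (τ (i + 1) ω) (discretize m τ δ i ω + δ i ω)

variable {n : ℕ} {τ δ : ℕ → Ω → ℝ≥0∞}

lemma le_discretize (m : ℕ) : ∀ i ω, τ i ω ≤ discretize m τ δ i ω
  | 0, _ => ENNReal.le_gridCeil m _
  | _ + 1, _ => le_max_left _ _

lemma discretize_le_add (horder : ∀ i, i + 1 < n → ∀ ω, τ i ω + δ i ω ≤ τ (i + 1) ω) (m : ℕ) :
    ∀ i < n, ∀ ω, discretize m τ δ i ω ≤ τ i ω + ((m : ℝ≥0∞) + 1)⁻¹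
  | 0, _, _ => ENNReal.gridCeil_le_add m _
  | i + 1, hi, ω => max_le le_self_add <|
    calc discretize m τ δ i ω + δ i ω ≤ τ i ω + ((m : ℝ≥0∞) + 1)⁻¹ + δ i ω := by
          gcongr; exact discretize_le_add horder m i (by omega) ω
      _ = τ i ω + δ i ω + ((m : ℝ≥0∞) + 1)⁻¹ := add_right_comm _ _ _
      _ ≤ τ (i + 1) ω + ((m : ℝ≥0∞) + 1)⁻¹ := by gcongr; exact horder i hi ω

lemma discretize_eq_top_iff (horder : ∀ i, i + 1 < n → ∀ ω, τ i ω + δ i ω ≤ τ (i + 1) ω)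
    (m : ℕ) : ∀ i < n, ∀ ω, discretize m τ δ i ω = ∞ ↔ τ i ω = ∞ := fun i hi ω =>
  ENNReal.eq_top_iff_of_le_of_le_add (le_discretize m i ω) (discretize_le_add horder m i hi ω)
    (by simp)

lemma tendsto_discretize (horder : ∀ i, i + 1 < n → ∀ ω, τ i ω + δ i ω ≤ τ (i + 1) ω) :
    ∀ i < n, ∀ ω, Tendsto (fun m => discretize m τ δ i ω) atTop (𝓝 (τ i ω)) := fun i hi ω =>
  ENNReal.tendsto_of_le_of_le_add_inv (fun m => le_discretize m i ω)
    fun m => discretize_le_add horder m i hi ω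

lemma countable_range_discretize_zero (m : ℕ) : (range (discretize m τ δ 0)).Countable :=
  (ENNReal.countable_range_gridCeil m).mono (range_comp_subset_range _ _)

lemma isStrategy_discretize {f : Filtration ℝ≥0 m0} [f.IsRightContinuous] {σ : Ω → ℝ≥0∞}
    (hτ : IsStrategy f δ n σ τ) (hδ : ∀ i, i + 1 < n → IsStoppingTime f (δ i)) (m : ℕ) :
    IsStrategy f δ n σ (discretize m τ δ) := by
  have hstop : ∀ i, i < n → IsStoppingTime f (discretize m τ δ i) := by
    intro i hi
    induction i with
    | zero => exact IsStoppingTime.gridCeil hτ.1 m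
    | succ i ih =>
      exact (hτ.isStoppingTime hδ (i + 1) hi).max
        ((ih (by omega)).add_of_isRightContinuous (hδ i hi))
  exact isStrategy_of_isStoppingTime hδ (IsStoppingTime.gridCeil hτ.1 m)
    (fun ω => (hτ.2.1 ω).trans (le_discretize m 0 ω))
    fun i hi => ⟨hstop (i + 1) hi, fun ω => le_max_right _ _⟩

end Discretize

lemma measurable_uncurry_of_continuousWithinAt_Ici {β : Type*} [TopologicalSpace β]
    [TopologicalSpace.PseudoMetrizableSpace β] [MeasurableSpace β] [BorelSpace β] {Y : ℝ≥0 → Ω → β}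
    (hY : ∀ t, Measurable (Y t)) (hYrc : ∀ ω t, ContinuousWithinAt (fun s => Y s ω) (Ici t) t) :
    Measurable (Function.uncurry Y) := by
  have hgrid : ∀ m : ℕ, Measurable fun p : ℝ≥0 × Ω => Y (NNReal.gridCeil m p.1) p.2 := fun m =>
    (measurable_from_prod_countable_right (f := fun q : ℕ × Ω => Y (q.1 / (m + 1)) q.2)
      fun k => hY (k / (m + 1))).comp
      (((measurable_fst.mul_const _).nat_ceil).prodMk measurable_snd)
  exact measurable_of_tendsto_metrizable hgrid <| tendsto_pi_nhds.2 fun p =>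
    (hYrc p.2 p.1).tendsto.comp (NNReal.tendsto_gridCeil p.1)

section Reward

variable {Y : ℝ≥0 → Ω → ℝ}

lemma evalAt_sub_evalAt {τ τ' : Ω → ℝ≥0∞} (htop : ∀ ω, τ' ω = ∞ ↔ τ ω = ∞) :
    (fun ω => evalAt Y τ' ω - evalAt Y τ ω) =
      {ω | τ ω ≠ ∞}.indicator fun ω => Y (τ' ω).toNNReal ω - Y (τ ω).toNNReal ω := by
  ext ω
  by_cases h : τ ω = ∞
  · simp [evalAt, h, (htop ω).2 h]
  · simp [evalAt, h, (htop ω).not.2 h]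

lemma enorm_evalAt_sub_le (hYpos : ∀ t ω, 0 ≤ Y t ω) {τ τ' : Ω → ℝ≥0∞}
    (htop : ∀ ω, τ' ω = ∞ ↔ τ ω = ∞) (ω : Ω) :
    ‖evalAt Y τ' ω - evalAt Y τ ω‖ₑ ≤ ⨆ t, ENNReal.ofReal (Y t ω) := by
  rw [congrFun (evalAt_sub_evalAt htop) ω, indicator]
  split_ifs
  · set a := Y (τ' ω).toNNReal ω
    set b := Y (τ ω).toNNReal ω
    have hab : |a - b| ≤ max a b :=
      abs_sub_le_iff.2 ⟨by linarith [le_max_left a b, hYpos (τ ω).toNNReal ω],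
        by linarith [le_max_right a b, hYpos (τ' ω).toNNReal ω]⟩
    rw [Real.enorm_eq_ofReal_abs]
    refine (ENNReal.ofReal_le_ofReal hab).trans ?_
    rw [ENNReal.ofReal_max]
    exact max_le (le_iSup (fun t => ENNReal.ofReal (Y t ω)) _)
      (le_iSup (fun t => ENNReal.ofReal (Y t ω)) _)
  · simp

lemma tendsto_evalAt (hYrc : ∀ ω t, ContinuousWithinAt (fun s => Y s ω) (Ici t) t)
    {τ : Ω → ℝ≥0∞} {τ' : ℕ → Ω → ℝ≥0∞} {ω : Ω} (hle : ∀ m, τ ω ≤ τ' m ω)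
    (hlim : Tendsto (fun m => τ' m ω) atTop (𝓝 (τ ω))) :
    Tendsto (fun m => evalAt Y (τ' m) ω) atTop (𝓝 (evalAt Y τ ω)) := by
  by_cases h : τ ω = ∞
  · have h' : ∀ m, τ' m ω = ∞ := fun m => top_le_iff.1 (h ▸ hle m)
    simp [evalAt, h, h']
  have hfin : ∀ᶠ m in atTop, τ' m ω ≠ ∞ := hlim.eventually_ne h
  have hlim' : Tendsto (fun m => (τ' m ω).toNNReal) atTop (𝓝[≥] (τ ω).toNNReal) :=
    tendsto_nhdsWithin_iff.2 ⟨(ENNReal.tendsto_toNNReal h).comp hlim,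
      hfin.mono fun m hm => ENNReal.toNNReal_mono hm (hle m)⟩
  rw [show evalAt Y τ ω = Y (τ ω).toNNReal ω by simp [evalAt, h]]
  exact ((hYrc ω _).tendsto.comp hlim').congr' (hfin.mono fun m hm => by simp [evalAt, hm])

end Reward

section RewardSum

variable {Y : ℝ≥0 → Ω → ℝ} {n : ℕ} {τ τ' : ℕ → Ω → ℝ≥0∞}

lemma rewardSum_sub_rewardSum (ω : Ω) :
    rewardSum Y n τ' ω - rewardSum Y n τ ω =
      ∑ i ∈ Finset.range n, (evalAt Y (τ' i) ω - evalAt Y (τ i) ω) :=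
  (Finset.sum_sub_distrib _ _).symm

lemma measurable_rewardSum_sub (hY : Measurable (Function.uncurry Y))
    (hτ : ∀ i < n, Measurable (τ i)) (hτ' : ∀ i < n, Measurable (τ' i))
    (htop : ∀ i < n, ∀ ω, τ' i ω = ∞ ↔ τ i ω = ∞) :
    Measurable fun ω => rewardSum Y n τ' ω - rewardSum Y n τ ω := by
  simp_rw [rewardSum_sub_rewardSum]
  refine Finset.measurable_sum _ fun i hi => ?_
  have hi := Finset.mem_range.1 hi
  rw [evalAt_sub_evalAt (htop i hi)]
  refine Measurable.indicator ?_ (hτ i hi (measurableSet_singleton ∞)).compl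
  exact (hY.comp ((ENNReal.measurable_toNNReal.comp (hτ' i hi)).prodMk measurable_id)).sub
    (hY.comp ((ENNReal.measurable_toNNReal.comp (hτ i hi)).prodMk measurable_id))

lemma enorm_rewardSum_sub_le (hYpos : ∀ t ω, 0 ≤ Y t ω)
    (htop : ∀ i < n, ∀ ω, τ' i ω = ∞ ↔ τ i ω = ∞) (ω : Ω) :
    ‖rewardSum Y n τ' ω - rewardSum Y n τ ω‖ₑ ≤ n * ⨆ t, ENNReal.ofReal (Y t ω) := by
  rw [rewardSum_sub_rewardSum]
  refine (enorm_sum_le _ _).trans ?_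
  simpa using Finset.sum_le_sum fun i hi =>
    enorm_evalAt_sub_le hYpos (htop i (Finset.mem_range.1 hi)) ω

variable {μ : Measure Ω}

lemma lintegral_natCast_mul_iSup_lt_top (hYint : ∫⁻ ω, ⨆ t, ENNReal.ofReal (Y t ω) ∂μ < ∞) :
    ∫⁻ ω, n * ⨆ t, ENNReal.ofReal (Y t ω) ∂μ < ∞ := by
  rw [lintegral_const_mul' _ _ (ENNReal.natCast_ne_top n)]
  exact ENNReal.mul_lt_top (ENNReal.natCast_lt_top n) hYint

lemma integrable_rewardSum_sub (hY : Measurable (Function.uncurry Y))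
    (hYpos : ∀ t ω, 0 ≤ Y t ω) (hYint : ∫⁻ ω, ⨆ t, ENNReal.ofReal (Y t ω) ∂μ < ∞)
    (hτ : ∀ i < n, Measurable (τ i)) (hτ' : ∀ i < n, Measurable (τ' i))
    (htop : ∀ i < n, ∀ ω, τ' i ω = ∞ ↔ τ i ω = ∞) :
    Integrable (rewardSum Y n τ' - rewardSum Y n τ) μ :=
  ⟨(measurable_rewardSum_sub hY hτ hτ' htop).aestronglyMeasurable,
    (lintegral_mono (enorm_rewardSum_sub_le hYpos htop)).trans_lt
      (lintegral_natCast_mul_iSup_lt_top hYint)⟩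

lemma tendsto_rewardSum (hYrc : ∀ ω t, ContinuousWithinAt (fun s => Y s ω) (Ici t) t)
    {τ' : ℕ → ℕ → Ω → ℝ≥0∞} {ω : Ω} (hle : ∀ m, ∀ i < n, τ i ω ≤ τ' m i ω)
    (hlim : ∀ i < n, Tendsto (fun m => τ' m i ω) atTop (𝓝 (τ i ω))) :
    Tendsto (fun m => rewardSum Y n (τ' m) ω) atTop (𝓝 (rewardSum Y n τ ω)) :=
  tendsto_finsetSum _ fun i hi =>
    tendsto_evalAt hYrc (fun m => hle m i (Finset.mem_range.1 hi)) (hlim i (Finset.mem_range.1 hi))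

lemma tendsto_eLpNorm_rewardSum_sub (hY : Measurable (Function.uncurry Y))
    (hYpos : ∀ t ω, 0 ≤ Y t ω) (hYrc : ∀ ω t, ContinuousWithinAt (fun s => Y s ω) (Ici t) t)
    (hYint : ∫⁻ ω, ⨆ t, ENNReal.ofReal (Y t ω) ∂μ < ∞) {τ' : ℕ → ℕ → Ω → ℝ≥0∞}
    (hτ : ∀ i < n, Measurable (τ i)) (hτ' : ∀ m, ∀ i < n, Measurable (τ' m i))
    (htop : ∀ m, ∀ i < n, ∀ ω, τ' m i ω = ∞ ↔ τ i ω = ∞)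
    (hle : ∀ m, ∀ i < n, ∀ ω, τ i ω ≤ τ' m i ω)
    (hlim : ∀ i < n, ∀ ω, Tendsto (fun m => τ' m i ω) atTop (𝓝 (τ i ω))) :
    Tendsto (fun m => eLpNorm (rewardSum Y n (τ' m) - rewardSum Y n τ) 1 μ) atTop (𝓝 0) := by
  simp_rw [eLpNorm_one_eq_lintegral_enorm, Pi.sub_apply]
  have hconv : ∀ ω, Tendsto (fun m => ‖rewardSum Y n (τ' m) ω - rewardSum Y n τ ω‖ₑ) atTop (𝓝 0) :=
    fun ω => by
      simpa [Function.comp_def] using (continuous_enorm.tendsto _).comp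
        ((tendsto_rewardSum hYrc (fun m i hi => hle m i hi ω) fun i hi => hlim i hi ω).sub_const
          (rewardSum Y n τ ω))
  simpa using tendsto_lintegral_of_dominated_convergence _
    (fun m => (measurable_rewardSum_sub hY hτ (hτ' m) (htop m)).enorm)
    (fun m => .of_forall (enorm_rewardSum_sub_le hYpos (htop m)))
    (lintegral_natCast_mul_iSup_lt_top hYint).ne (.of_forall hconv)

end RewardSum

section ConditionalExpectation

variable {E : Type*} [NormedAddCommGroup E] [NormedSpace ℝ E] [CompleteSpace E]
  {μ : Measure Ω}

lemma eLpNorm_one_condExp_sub_le {m : MeasurableSpace Ω} {f g : Ω → E}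
    (hfg : Integrable (f - g) μ) : eLpNorm (μ[f|m] - μ[g|m]) 1 μ ≤ eLpNorm (f - g) 1 μ := by
  by_cases hg : Integrable g μ
  · have hf : Integrable f μ := by simpa using hfg.add hg
    rw [eLpNorm_congr_ae (condExp_sub hf hg m).symm]
    exact eLpNorm_condExp_le_eLpNorm _ le_rfl
  · have hf : ¬Integrable f μ := fun hf => hg (by simpa using hf.sub hfg)
    simp [condExp_of_not_integrable hf, condExp_of_not_integrable hg]

lemma ae_le_of_tendsto_eLpNorm_sub {F : ℕ → Ω → ℝ} {f g : Ω → ℝ}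
    (hF : ∀ m, AEStronglyMeasurable (F m) μ) (hf : AEStronglyMeasurable f μ)
    (hlim : Tendsto (fun m => eLpNorm (F m - f) 1 μ) atTop (𝓝 0)) (hle : ∀ m, F m ≤ᵐ[μ] g) :
    f ≤ᵐ[μ] g := by
  obtain ⟨ns, -, hns⟩ :=
    (tendstoInMeasure_of_tendsto_eLpNorm one_ne_zero hF hf hlim).exists_seq_tendsto_ae
  filter_upwards [hns, ae_all_iff.2 hle] with ω hω hle
  exact le_of_tendsto hω (.of_forall fun i => hle (ns i))

end ConditionalExpectation

lemma condExp_rewardSum_ae_le {f : Filtration ℝ≥0 m0} [f.IsRightContinuous] {μ : Measure Ω}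
    {Y : ℝ≥0 → Ω → ℝ} (hY : ∀ t, Measurable (Y t)) (hYpos : ∀ t ω, 0 ≤ Y t ω)
    (hYrc : ∀ ω t, ContinuousWithinAt (fun s => Y s ω) (Ici t) t)
    (hYint : ∫⁻ ω, ⨆ t, ENNReal.ofReal (Y t ω) ∂μ < ∞) {δ : ℕ → Ω → ℝ≥0∞} {n : ℕ}
    (hδ : ∀ i, i + 1 < n → IsStoppingTime f (δ i)) {σ : Ω → ℝ≥0∞} {τ : ℕ → Ω → ℝ≥0∞}
    (hτ : IsStrategy f δ n σ τ) {Zd : Ω → ℝ} (hZd : ∀ g ∈ gainFamDisc μ Y f δ n σ, g ≤ᵐ[μ] Zd) :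
    μ[rewardSum Y n τ|sigmaAt f σ] ≤ᵐ[μ] Zd := by
  have horder : ∀ i, i + 1 < n → ∀ ω, τ i ω + δ i ω ≤ τ (i + 1) ω := fun i hi => (hτ.2.2 i hi).2
  have hτ' : ∀ m, IsStrategy f δ n σ (discretize m τ δ) := isStrategy_discretize hτ hδ
  have hmeas : ∀ i < n, Measurable (τ i) := fun i hi => (hτ.isStoppingTime hδ i hi).measurable'
  have hmeas' : ∀ m, ∀ i < n, Measurable (discretize m τ δ i) := fun m i hi =>
    ((hτ' m).isStoppingTime hδ i hi).measurable'
  have hYj := measurable_uncurry_of_continuousWithinAt_Ici hY hYrc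
  have htop := discretize_eq_top_iff horder
  refine ae_le_of_tendsto_eLpNorm_sub (fun _ => integrable_condExp.aestronglyMeasurable)
    integrable_condExp.aestronglyMeasurable ?_
    fun m => hZd _ ⟨_, hτ' m, countable_range_discretize_zero m, rfl⟩
  exact tendsto_of_tendsto_of_tendsto_of_le_of_le tendsto_const_nhds
    (tendsto_eLpNorm_rewardSum_sub hYj hYpos hYrc hYint hmeas hmeas' htop
      (fun m i _ => le_discretize m i) (tendsto_discretize horder))
    (fun _ => zero_le)
    fun m => eLpNorm_one_condExp_sub_le
      (integrable_rewardSum_sub hYj hYpos hYint hmeas (hmeas' m) (htop m))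

theorem Z_disc_le_Z_and_eq_of_stopping_general
    (μ : Measure Ω)
    (𝔉 : ℝ≥0 → MeasurableSpace Ω) (hle : ∀ t, 𝔉 t ≤ m0) (hmono : Monotone 𝔉)
    (hrc : RightContinuousFilt 𝔉)
    (Y : ℝ≥0 → Ω → ℝ) (hadapt : ∀ t, Measurable[𝔉 t] (Y t))
    (hYpos : ∀ t ω, 0 ≤ Y t ω)
    (hYrc : ∀ ω t, ContinuousWithinAt (fun s => Y s ω) (Set.Ici t) t)
    (hYint : ∫⁻ ω, ⨆ t : ℝ≥0, ENNReal.ofReal (Y t ω) ∂μ < ∞)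
    (n : ℕ) (δ : ℕ → Ω → ℝ≥0∞)
    (σ : Ω → ℝ≥0∞)
    (Z Zd : Ω → ℝ)
    (hZ : IsEssSupFam μ (gainFam μ Y 𝔉 δ n σ) Z)
    (hZd : IsEssSupFam μ (gainFamDisc μ Y 𝔉 δ n σ) Zd) :
    Zd ≤ᵐ[μ] Z ∧
      ((∀ i, i + 1 < n → IsStoppingTimeE 𝔉 (δ i)) → Zd =ᵐ[μ] Z) := by
  have hdisc : Zd ≤ᵐ[μ] Z := hZd.2 _ fun g ⟨τ, hτ, _, hg⟩ => hZ.1 g ⟨τ, hτ, hg⟩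
  refine ⟨hdisc, fun hδ => hdisc.antisymm (hZ.2 _ ?_)⟩
  let f : Filtration ℝ≥0 m0 := ⟨𝔉, hmono, hle⟩
  have : f.IsRightContinuous := Filtration.isRightContinuous_of_rightContinuousFilt hrc
  rintro _ ⟨τ, hτ, rfl⟩
  exact condExp_rewardSum_ae_le (f := f) (fun t => (hadapt t).mono (hle t) le_rfl) hYpos hYrc
    hYint hδ hτ hZd.1

/-- `Z_n^{δ,𝔉}(σ)_disc ≤ Z_n^{δ,𝔉}(σ)` a.s., with equality if the
waiting times `δ₁,…,δ_{n-1}` are `𝔉`-stopping times. -/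
theorem Z_disc_le_Z_and_eq_of_stopping
    (μ : Measure Ω) [IsProbabilityMeasure μ]
    (𝔉 : ℝ≥0 → MeasurableSpace Ω) (hle : ∀ t, 𝔉 t ≤ m0) (hmono : Monotone 𝔉)
    (hrc : RightContinuousFilt 𝔉)
    (hnull : ∀ A : Set Ω, μ A = 0 → MeasurableSet[𝔉 0] A)
    (Y : ℝ≥0 → Ω → ℝ) (hadapt : ∀ t, Measurable[𝔉 t] (Y t))
    (hYpos : ∀ t ω, 0 ≤ Y t ω)
    (hYrc : ∀ ω t, ContinuousWithinAt (fun s => Y s ω) (Set.Ici t) t)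
    (hYint : ∫⁻ ω, ⨆ t : ℝ≥0, ENNReal.ofReal (Y t ω) ∂μ < ∞)
    (n : ℕ) (hn : 2 ≤ n) (δ : ℕ → Ω → ℝ≥0∞)
    (hδfin : ∀ i, i + 1 < n → ∀ᵐ ω ∂μ, δ i ω < ∞)
    (σ : Ω → ℝ≥0∞) (hσ : IsStoppingTimeE 𝔉 σ)
    (Z Zd : Ω → ℝ)
    (hZ : IsEssSupFam μ (gainFam μ Y 𝔉 δ n σ) Z)
    (hZd : IsEssSupFam μ (gainFamDisc μ Y 𝔉 δ n σ) Zd) :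
    Zd ≤ᵐ[μ] Z ∧
      ((∀ i, i + 1 < n → IsStoppingTimeE 𝔉 (δ i)) → Zd =ᵐ[μ] Z) :=
  Z_disc_le_Z_and_eq_of_stopping_general μ 𝔉 hle hmono hrc Y hadapt hYpos hYrc hYint n δ σ Z Zd hZ
    hZd

end
end

section
/- House-selling problem with one exercise: let X₁, X₂, … be i.i.d. nonnegative random variables with 𝔼(X₁²) < ∞ and 𝔼(X₁) > 0, let α ∈ (0,1), and for x ≥ 0 set X₀ := x. Then there exists a unique x* > 0 satisfying (1−α)/α = 𝔼((X₁/x* − 1)⁺), and the optimal stopping value v(x) := sup over stopping times τ (with respect to the filtration generated by X₀, X₁, X₂, …, with values in ℕ₀ ∪ {∞}, where α^τ X_τ := 0 on {τ = ∞}) of 𝔼(α^τ X_τ) equals (x − x*)⁺ + x*; moreover this value is attained by the stopping time τ* := inf{k ≥ 0 : X_k ≥ x*}. -/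
open MeasureTheory Set Filter ProbabilityTheory
open scoped ENNReal NNReal

noncomputable section

variable {Ω : Type*} {m0 : MeasurableSpace Ω}

/-- The natural discrete-time filtration `𝓕_k = σ(X₀, …, X_k)` of a sequence `X`. -/
def natFiltration (X : ℕ → Ω → ℝ) (k : ℕ) : MeasurableSpace Ω :=
  ⨆ i ∈ Finset.range (k + 1), MeasurableSpace.comap (X i) inferInstance

/-- `τ : Ω → ℕ ∪ {∞}` is a stopping time for the discrete filtration `F`. -/
def IsStoppingTimeN (F : ℕ → MeasurableSpace Ω) (τ : Ω → ℕ∞) : Prop :=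
  ∀ k : ℕ, MeasurableSet[F k] {ω | τ ω ≤ (k : ℕ∞)}

/-- The discounted reward `α^τ X_τ`, interpreted as `0` on `{τ = ∞}`. -/
def discReward (α : ℝ) (X : ℕ → Ω → ℝ) (τ : Ω → ℕ∞) (ω : Ω) : ℝ :=
  if h : τ ω = ⊤ then 0 else α ^ ((τ ω).untop h) * X ((τ ω).untop h) ω

/-!
Let `x*` be the root of `𝔼 (X₁ - x*)⁺ = (1 - α) / α · x*`; it exists and is unique because the
left side is continuous and nonincreasing while the right side increases strictly from `0`.
This equation says `α 𝔼 max (X₁, x*) = x*`, and since `X_{n+1}` is independent of `𝓕_n`, the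
process `α ^ n max (X_n, x*)` is a supermartingale. For a stopping time `τ`, its integral over
`{n ≤ τ}` dominates the reward collected on `{τ = n}` plus its own integral over `{n + 1 ≤ τ}`;
telescoping bounds `𝔼 α^τ X_τ` by `max (x, x*)`. For the entry time of `[x*, ∞)` every step is an
equality and the remainder `α ^ n x* ℙ(n + 1 ≤ τ)` tends to `0`.
-/

open scoped Topology

section Threshold

variable {μ : Measure Ω} {Y : Ω → ℝ}

lemma integrable_max_sub_const [IsFiniteMeasure μ] (hY : Integrable Y μ) (y : ℝ) :
    Integrable (fun ω => max (Y ω - y) 0) μ :=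
  (hY.sub (integrable_const y)).sup (integrable_const 0)

lemma antitone_integral_max_sub [IsFiniteMeasure μ] (hY : Integrable Y μ) :
    Antitone fun y => ∫ ω, max (Y ω - y) 0 ∂μ := fun y z hyz =>
  integral_mono (integrable_max_sub_const hY z) (integrable_max_sub_const hY y)
    fun ω => max_le_max (by linarith) le_rfl

lemma lipschitzWith_integral_max_sub [IsProbabilityMeasure μ] (hY : Integrable Y μ) :
    LipschitzWith 1 fun y => ∫ ω, max (Y ω - y) 0 ∂μ := by
  refine LipschitzWith.of_dist_le_mul fun y z => ?_
  rw [NNReal.coe_one, one_mul, Real.dist_eq, Real.dist_eq,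
    ← integral_sub (integrable_max_sub_const hY y) (integrable_max_sub_const hY z)]
  have hpt : ∀ ω, ‖max (Y ω - y) 0 - max (Y ω - z) 0‖ ≤ |y - z| := fun ω =>
    (abs_max_sub_max_le_abs _ _ _).trans_eq (by rw [sub_sub_sub_cancel_left, abs_sub_comm])
  simpa using norm_integral_le_of_norm_le_const (μ := μ) (Eventually.of_forall hpt)

lemma exists_pos_integral_max_sub_eq_mul [IsProbabilityMeasure μ] (hY : Integrable Y μ)
    (hmean : 0 < ∫ ω, Y ω ∂μ) {c : ℝ} (hc : 0 < c) :
    ∃ z, 0 < z ∧ ∫ ω, max (Y ω - z) 0 ∂μ = c * z := by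
  set g := fun y => ∫ ω, max (Y ω - y) 0 ∂μ
  have hg0 : 0 < g 0 := hmean.trans_le <|
    integral_mono hY (integrable_max_sub_const hY 0) fun ω => by simp
  have hM : 0 ≤ g 0 / c := by positivity
  -- `g y - c y` is `g 0 > 0` at `y = 0` and `g (g 0 / c) - g 0 ≤ 0` at `y = g 0 / c`
  obtain ⟨z, hz, hgz⟩ := intermediate_value_Icc' hM
    ((lipschitzWith_integral_max_sub hY).continuous.sub (continuous_const_mul c)).continuousOn
    (show (0 : ℝ) ∈ Icc (g (g 0 / c) - c * (g 0 / c)) (g 0 - c * 0) from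
      ⟨by rw [mul_div_cancel₀ _ hc.ne', sub_nonpos]; exact antitone_integral_max_sub hY hM,
        by simpa using hg0.le⟩)
  refine ⟨z, hz.1.lt_of_ne ?_, sub_eq_zero.mp hgz⟩
  rintro rfl
  rw [Pi.sub_apply, mul_zero, sub_zero] at hgz
  exact hg0.ne' hgz

lemma strictAnti_integral_max_sub_sub_mul [IsFiniteMeasure μ] (hY : Integrable Y μ) {c : ℝ}
    (hc : 0 < c) :
    StrictAnti fun y => ∫ ω, max (Y ω - y) 0 ∂μ - c * y :=
  (antitone_integral_max_sub hY).add_strictAnti (strictMono_mul_left_of_pos hc).neg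

lemma integral_max_div_sub_one {y : ℝ} (hy : 0 < y) :
    ∫ ω, max (Y ω / y - 1) 0 ∂μ = (∫ ω, max (Y ω - y) 0 ∂μ) / y := by
  rw [← integral_div]
  congr 1 with ω
  rw [← max_div_div_right hy.le, zero_div, sub_div, div_self hy.ne']

lemma integral_max_eq_add_integral_max_sub [IsProbabilityMeasure μ] (hY : Integrable Y μ)
    (b : ℝ) : ∫ ω, max (Y ω) b ∂μ = b + ∫ ω, max (Y ω - b) 0 ∂μ := by
  have hsplit : (fun ω => max (Y ω) b) = fun ω => b + max (Y ω - b) 0 := by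
    ext ω; rw [← sub_self b, max_sub_sub_right, add_sub_cancel]
  rw [hsplit, integral_add (integrable_const b) (integrable_max_sub_const hY b), integral_const,
    probReal_univ, one_smul]

end Threshold

section NatFiltration

variable {X : ℕ → Ω → ℝ}

lemma natFiltration_le (hXm : ∀ i, Measurable (X i)) (k : ℕ) : natFiltration X k ≤ m0 :=
  iSup₂_le fun i _ => (hXm i).comap_le

lemma measurable_natFiltration {i k : ℕ} (h : i ≤ k) : Measurable[natFiltration X k] (X i) :=
  measurable_iff_comap_le.mpr <| le_biSup (fun i => MeasurableSpace.comap (X i) inferInstance)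
    (Finset.mem_range_succ_iff.mpr h)

lemma indep_natFiltration_comap_succ {μ : Measure Ω} (hXm : ∀ i, Measurable (X i)) {x : ℝ}
    (hX0 : ∀ ω, X 0 ω = x) (hindep : iIndepFun (fun k => X (k + 1)) μ) (n : ℕ) :
    Indep (natFiltration X n) (MeasurableSpace.comap (X (n + 1)) inferInstance) μ := by
  have hpast :
      natFiltration X n ≤ ⨆ i ∈ Iio n, MeasurableSpace.comap (X (i + 1)) inferInstance := by
    refine iSup₂_le fun i hi => ?_
    rcases i with _ | i
    · rw [funext hX0, MeasurableSpace.comap_const]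
      exact bot_le
    · exact le_biSup (fun i => MeasurableSpace.comap (X (i + 1)) inferInstance)
        (show i < n by simpa using hi)
  have h := indep_iSup_of_disjoint (fun i => (hXm (i + 1)).comap_le) hindep.iIndep
    (S := Iio n) (T := {n}) (Set.disjoint_singleton_right.mpr (lt_irrefl n))
  rw [iSup_singleton] at h
  exact indep_of_indep_of_le_left h hpast

end NatFiltration

section StoppingTime

variable {F : ℕ → MeasurableSpace Ω} {τ : Ω → ℕ∞}

lemma setOf_succ_le_eq_compl (τ : Ω → ℕ∞) (n : ℕ) :
    {ω | ((n + 1 : ℕ) : ℕ∞) ≤ τ ω} = {ω | τ ω ≤ n}ᶜ := by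
  ext ω
  simp [ENat.add_one_le_iff (ENat.natCast_ne_top n)]

lemma setOf_le_eq_union (τ : Ω → ℕ∞) (n : ℕ) :
    {ω | (n : ℕ∞) ≤ τ ω} = {ω | τ ω = n} ∪ {ω | ((n + 1 : ℕ) : ℕ∞) ≤ τ ω} := by
  ext ω
  rw [mem_union, mem_ofPred_eq, mem_ofPred_eq, mem_ofPred_eq, Nat.cast_succ,
    ENat.add_one_le_iff (ENat.natCast_ne_top n), le_iff_eq_or_lt, eq_comm]

lemma disjoint_setOf_eq_setOf_succ_le (τ : Ω → ℕ∞) (n : ℕ) :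
    Disjoint {ω | τ ω = n} {ω | ((n + 1 : ℕ) : ℕ∞) ≤ τ ω} :=
  Set.disjoint_left.mpr fun ω (h : τ ω = n) => by rw [mem_ofPred_eq, h, Nat.cast_le]; omega

lemma IsStoppingTimeN.measurableSet_succ_le (hτ : IsStoppingTimeN F τ) (n : ℕ) :
    MeasurableSet[F n] {ω | ((n + 1 : ℕ) : ℕ∞) ≤ τ ω} := by
  rw [setOf_succ_le_eq_compl]
  exact (hτ n).compl

lemma IsStoppingTimeN.measurableSet_ge (hF : ∀ n, F n ≤ m0) (hτ : IsStoppingTimeN F τ) :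
    ∀ n : ℕ, MeasurableSet {ω | (n : ℕ∞) ≤ τ ω}
  | 0 => by simp
  | n + 1 => hF n _ (hτ.measurableSet_succ_le n)

lemma IsStoppingTimeN.measurableSet_eq (hF : ∀ n, F n ≤ m0) (hτ : IsStoppingTimeN F τ)
    (n : ℕ) : MeasurableSet {ω | τ ω = n} := by
  have h : {ω | τ ω = n} = {ω | τ ω ≤ n} ∩ {ω | (n : ℕ∞) ≤ τ ω} := by
    ext ω; exact le_antisymm_iff
  rw [h]
  exact (hF n _ (hτ n)).inter (hτ.measurableSet_ge hF n)

end StoppingTime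

section Reward

variable {μ : Measure Ω} {X : ℕ → Ω → ℝ} {τ : Ω → ℕ∞} {α : ℝ}

lemma discReward_eq_tsum_indicator (α : ℝ) (X : ℕ → Ω → ℝ) (τ : Ω → ℕ∞) (ω : Ω) :
    discReward α X τ ω = ∑' k : ℕ, {ω | τ ω = k}.indicator (fun ω => α ^ k * X k ω) ω := by
  by_cases htop : τ ω = ⊤
  · simp [discReward, htop]
  obtain ⟨n, hn⟩ := ENat.ne_top_iff_exists.mp htop
  have huntop : (τ ω).untop htop = n := (WithTop.untop_eq_iff htop).mpr hn.symm
  rw [discReward, dif_neg htop, huntop,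
    tsum_eq_single n fun k hk => indicator_of_notMem (by simp [← hn, Ne.symm hk]) _]
  exact (indicator_of_mem (s := {ω | τ ω = n}) hn.symm (fun ω => α ^ n * X n ω)).symm

lemma hasSum_setIntegral_discReward (hα : |α| < 1) (hXi : ∀ k, Integrable (X k) μ) {C : ℝ}
    (hC : ∀ k, ∫ ω, ‖X k ω‖ ∂μ ≤ C) (hτ : ∀ k : ℕ, MeasurableSet {ω | τ ω = k}) :
    HasSum (fun k : ℕ => ∫ ω in {ω | τ ω = k}, α ^ k * X k ω ∂μ)
      (∫ ω, discReward α X τ ω ∂μ) := by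
  have hint (k : ℕ) : Integrable ({ω | τ ω = k}.indicator fun ω => α ^ k * X k ω) μ :=
    ((hXi k).const_mul _).indicator (hτ k)
  have hbound (k : ℕ) :
      ∫ ω, ‖{ω | τ ω = k}.indicator (fun ω => α ^ k * X k ω) ω‖ ∂μ ≤ |α| ^ k * C := by
    calc _ ≤ ∫ ω, |α| ^ k * ‖X k ω‖ ∂μ :=
          integral_mono (hint k).norm ((hXi k).norm.const_mul _) fun ω => by
            rw [norm_indicator_eq_indicator_norm]
            refine (indicator_le_self' (fun _ _ => by positivity) ω).trans_eq ?_
            rw [norm_mul, norm_pow, Real.norm_eq_abs]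
      _ ≤ |α| ^ k * C := by
          rw [integral_const_mul]
          exact mul_le_mul_of_nonneg_left (hC k) (by positivity)
  have hsum : Summable fun k : ℕ => ∫ ω, ‖{ω | τ ω = k}.indicator (fun ω => α ^ k * X k ω) ω‖ ∂μ :=
    Summable.of_nonneg_of_le (fun k => integral_nonneg fun ω => norm_nonneg _) hbound
      ((summable_geometric_of_lt_one (abs_nonneg α) hα).mul_right C)
  simpa only [integral_indicator (hτ _), ← discReward_eq_tsum_indicator] using
    hasSum_integral_of_summable_integral_norm hint hsum

end Reward

section IdentDistrib

variable {μ : Measure Ω} {X : ℕ → Ω → ℝ} {x : ℝ}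

lemma integrable_of_identDistrib [IsFiniteMeasure μ] (hX0 : ∀ ω, X 0 ω = x)
    (hident : ∀ k, IdentDistrib (X (k + 1)) (X 1) μ μ) (hX1 : Integrable (X 1) μ) :
    ∀ k, Integrable (X k) μ
  | 0 => by rw [funext hX0]; exact integrable_const x
  | k + 1 => (hident k).integrable_iff.mpr hX1

lemma integral_norm_le_of_identDistrib [IsProbabilityMeasure μ] (hX0 : ∀ ω, X 0 ω = x)
    (hident : ∀ k, IdentDistrib (X (k + 1)) (X 1) μ μ) :
    ∀ k, ∫ ω, ‖X k ω‖ ∂μ ≤ max ‖x‖ (∫ ω, ‖X 1 ω‖ ∂μ)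
  | 0 => by simp [hX0]
  | k + 1 => (hident k).norm.integral_eq.trans_le (le_max_right _ _)

end IdentDistrib

section RemainingValue

variable {μ : Measure Ω} {X : ℕ → Ω → ℝ} {F : ℕ → MeasurableSpace Ω} {τ : Ω → ℕ∞} {α b : ℝ}

def remainingValue (μ : Measure Ω) (X : ℕ → Ω → ℝ) (τ : Ω → ℕ∞) (α b : ℝ) (n : ℕ) : ℝ :=
  α ^ n * ∫ ω in {ω | (n : ℕ∞) ≤ τ ω}, max (X n ω) b ∂μ

lemma remainingValue_zero [IsProbabilityMeasure μ] {x : ℝ} (hX0 : ∀ ω, X 0 ω = x) :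
    remainingValue μ X τ α b 0 = max x b := by
  simp [remainingValue, hX0]

lemma remainingValue_nonneg (hα : 0 ≤ α) (hb : 0 ≤ b) (n : ℕ) :
    0 ≤ remainingValue μ X τ α b n :=
  mul_nonneg (pow_nonneg hα n) (integral_nonneg fun _ => le_max_of_le_right hb)

lemma remainingValue_eq_add [IsFiniteMeasure μ] (hF : ∀ n, F n ≤ m0) (hτ : IsStoppingTimeN F τ)
    {n : ℕ} (hXn : Integrable (X n) μ) :
    remainingValue μ X τ α b n = α ^ n * ((∫ ω in {ω | τ ω = n}, max (X n ω) b ∂μ) +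
      ∫ ω in {ω | ((n + 1 : ℕ) : ℕ∞) ≤ τ ω}, max (X n ω) b ∂μ) := by
  have hmax : Integrable (fun ω => max (X n ω) b) μ := hXn.sup (integrable_const b)
  rw [remainingValue, setOf_le_eq_union, setIntegral_union (disjoint_setOf_eq_setOf_succ_le τ n)
    (hF n _ (hτ.measurableSet_succ_le n)) hmax.integrableOn hmax.integrableOn]

lemma remainingValue_succ [IsProbabilityMeasure μ] (hXm : ∀ i, Measurable (X i)) {x : ℝ}
    (hX0 : ∀ ω, X 0 ω = x) (hindep : iIndepFun (fun k => X (k + 1)) μ)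
    (hident : ∀ k, IdentDistrib (X (k + 1)) (X 1) μ μ)
    (hτ : IsStoppingTimeN (natFiltration X) τ) (hfix : α * ∫ ω, max (X 1 ω) b ∂μ = b) (n : ℕ) :
    remainingValue μ X τ α b (n + 1) =
      α ^ n * (b * μ.real {ω | ((n + 1 : ℕ) : ℕ∞) ≤ τ ω}) := by
  have hmax : Measurable fun y : ℝ => max y b := measurable_id.max measurable_const
  have hdist : ∫ ω, max (X (n + 1) ω) b ∂μ = ∫ ω, max (X 1 ω) b ∂μ :=
    ((hident n).comp hmax).integral_eq
  rw [remainingValue, (indep_natFiltration_comap_succ hXm hX0 hindep n).setIntegral_eq_mul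
    (natFiltration_le hXm n) (hXm (n + 1)).aemeasurable (hτ.measurableSet_succ_le n)
    hmax.aestronglyMeasurable, hdist]
  linear_combination α ^ n * μ.real {ω | ((n + 1 : ℕ) : ℕ∞) ≤ τ ω} * hfix

section Step

variable [IsFiniteMeasure μ] (hF : ∀ n, F n ≤ m0) (hτ : IsStoppingTimeN F τ) {n : ℕ}
  (hXn : Integrable (X n) μ)
  (hsucc : remainingValue μ X τ α b (n + 1) = α ^ n * (b * μ.real {ω | ((n + 1 : ℕ) : ℕ∞) ≤ τ ω}))
include hF hτ hXn hsucc

lemma setIntegral_add_remainingValue_succ_le (hα : 0 ≤ α) :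
    ∫ ω in {ω | τ ω = n}, α ^ n * X n ω ∂μ + remainingValue μ X τ α b (n + 1) ≤
      remainingValue μ X τ α b n := by
  have hA := hF n _ (hτ.measurableSet_succ_le n)
  have hstop : ∫ ω in {ω | τ ω = n}, X n ω ∂μ ≤ ∫ ω in {ω | τ ω = n}, max (X n ω) b ∂μ :=
    setIntegral_mono hXn.integrableOn (hXn.sup (integrable_const b)).integrableOn
      fun _ => le_max_left _ _
  have hcont := setIntegral_ge_of_const_le_real hA (measure_ne_top μ _)
    (fun ω _ => le_max_right (X n ω) b) (hXn.sup (integrable_const b)).integrableOn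
  rw [remainingValue_eq_add hF hτ hXn, hsucc, integral_const_mul, ← mul_add]
  exact mul_le_mul_of_nonneg_left (add_le_add hstop hcont) (pow_nonneg hα n)

lemma setIntegral_add_remainingValue_succ_eq (hup : ∀ ω, τ ω = n → b ≤ X n ω)
    (hdown : ∀ ω, ((n + 1 : ℕ) : ℕ∞) ≤ τ ω → X n ω ≤ b) :
    ∫ ω in {ω | τ ω = n}, α ^ n * X n ω ∂μ + remainingValue μ X τ α b (n + 1) =
      remainingValue μ X τ α b n := by
  have hstop : ∫ ω in {ω | τ ω = n}, max (X n ω) b ∂μ = ∫ ω in {ω | τ ω = n}, X n ω ∂μ :=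
    setIntegral_congr_fun (hτ.measurableSet_eq hF n) fun ω hω => max_eq_left (hup ω hω)
  have hcont : ∫ ω in {ω | ((n + 1 : ℕ) : ℕ∞) ≤ τ ω}, max (X n ω) b ∂μ =
      b * μ.real {ω | ((n + 1 : ℕ) : ℕ∞) ≤ τ ω} := by
    rw [setIntegral_congr_fun (hF n _ (hτ.measurableSet_succ_le n))
      fun ω hω => max_eq_right (hdown ω hω), setIntegral_const, smul_eq_mul, mul_comm]
  rw [remainingValue_eq_add hF hτ hXn, hsucc, integral_const_mul, hstop, hcont, mul_add]

end Step

lemma tendsto_remainingValue_atTop [IsProbabilityMeasure μ] (hα : α ∈ Ico 0 1) (hb : 0 ≤ b)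
    (hsucc : ∀ n, remainingValue μ X τ α b (n + 1) =
      α ^ n * (b * μ.real {ω | ((n + 1 : ℕ) : ℕ∞) ≤ τ ω})) :
    Tendsto (remainingValue μ X τ α b) atTop (𝓝 0) := by
  rw [← tendsto_add_atTop_iff_nat 1]
  refine squeeze_zero (fun n => remainingValue_nonneg hα.1 hb (n + 1)) (fun n => ?_)
    (by simpa using (tendsto_pow_atTop_nhds_zero_of_lt_one hα.1 hα.2).mul_const b)
  rw [hsucc]
  exact mul_le_mul_of_nonneg_left (mul_le_of_le_one_right hb measureReal_le_one) (pow_nonneg hα.1 n)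

end RemainingValue

section EntryTime

variable {X : ℕ → Ω → ℝ} {b : ℝ} {ω : Ω} {n : ℕ}

def entryTime (X : ℕ → Ω → ℝ) (b : ℝ) (ω : Ω) : ℕ∞ :=
  ⨅ k ∈ {k : ℕ | b ≤ X k ω}, (k : ℕ∞)

lemma entryTime_le_iff : entryTime X b ω ≤ n ↔ ∃ i ≤ n, b ≤ X i ω := by
  rw [entryTime, ← ENat.lt_add_one_iff (ENat.natCast_ne_top n)]
  simp only [iInf_lt_iff]
  refine exists_congr fun i => ?_
  rw [exists_prop, ← Nat.cast_succ, Nat.cast_lt, Nat.lt_succ_iff, and_comm, Set.mem_ofPred_eq]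

lemma isStoppingTimeN_entryTime (X : ℕ → Ω → ℝ) (b : ℝ) :
    IsStoppingTimeN (natFiltration X) (entryTime X b) := by
  intro k
  have h : {ω | entryTime X b ω ≤ k} = ⋃ i ∈ Iic k, X i ⁻¹' Ici b := by
    ext ω
    simp [entryTime_le_iff]
  rw [h]
  exact (finite_Iic k).measurableSet_biUnion fun i hi =>
    measurable_natFiltration hi measurableSet_Ici

lemma le_of_entryTime_eq (h : entryTime X b ω = n) : b ≤ X n ω := by
  obtain ⟨i, hin, hi⟩ := entryTime_le_iff.mp h.le
  have hni : (n : ℕ∞) ≤ i := h ▸ iInf₂_le i hi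
  rwa [le_antisymm hin (Nat.cast_le.mp hni)] at hi

lemma lt_of_succ_le_entryTime (h : ((n + 1 : ℕ) : ℕ∞) ≤ entryTime X b ω) : X n ω < b := by
  by_contra! hn
  have := h.trans (entryTime_le_iff.mpr ⟨n, le_rfl, hn⟩)
  rw [Nat.cast_le] at this
  omega

end EntryTime

section OptimalValue

variable {μ : Measure Ω} [IsProbabilityMeasure μ] {X : ℕ → Ω → ℝ} {τ : Ω → ℕ∞} {x α b : ℝ}

lemma hasSum_setIntegral_discReward_of_identDistrib (hXm : ∀ i, Measurable (X i))
    (hX0 : ∀ ω, X 0 ω = x) (hident : ∀ k, IdentDistrib (X (k + 1)) (X 1) μ μ)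
    (hX1 : Integrable (X 1) μ) (hα : α ∈ Ioo 0 1) (hτ : IsStoppingTimeN (natFiltration X) τ) :
    HasSum (fun k : ℕ => ∫ ω in {ω | τ ω = k}, α ^ k * X k ω ∂μ)
      (∫ ω, discReward α X τ ω ∂μ) :=
  hasSum_setIntegral_discReward (abs_lt.mpr ⟨by linarith [hα.1], hα.2⟩)
    (integrable_of_identDistrib hX0 hident hX1) (integral_norm_le_of_identDistrib hX0 hident)
    (hτ.measurableSet_eq (natFiltration_le hXm))

variable (hXm : ∀ i, Measurable (X i)) (hX0 : ∀ ω, X 0 ω = x)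
  (hindep : iIndepFun (fun k => X (k + 1)) μ) (hident : ∀ k, IdentDistrib (X (k + 1)) (X 1) μ μ)
  (hX1 : Integrable (X 1) μ) (hα : α ∈ Ioo 0 1) (hb : 0 ≤ b)
  (hfix : α * ∫ ω, max (X 1 ω) b ∂μ = b) (hτ : IsStoppingTimeN (natFiltration X) τ)
include hXm hX0 hindep hident hX1 hα hb hfix hτ

lemma integral_discReward_le : ∫ ω, discReward α X τ ω ∂μ ≤ max x b := by
  have hXi := integrable_of_identDistrib hX0 hident hX1
  have hsucc := remainingValue_succ hXm hX0 hindep hident hτ hfix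
  rw [← remainingValue_zero (μ := μ) (τ := τ) (α := α) (b := b) hX0]
  refine le_of_tendsto'
    (hasSum_setIntegral_discReward_of_identDistrib hXm hX0 hident hX1 hα hτ).tendsto_sum_nat
    fun n => ?_
  calc ∑ k ∈ Finset.range n, ∫ ω in {ω | τ ω = k}, α ^ k * X k ω ∂μ
      ≤ ∑ k ∈ Finset.range n, (remainingValue μ X τ α b k - remainingValue μ X τ α b (k + 1)) :=
        Finset.sum_le_sum fun k _ => le_sub_iff_add_le.mpr <|
          setIntegral_add_remainingValue_succ_le (natFiltration_le hXm) hτ (hXi k) (hsucc k)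
            hα.1.le
    _ = remainingValue μ X τ α b 0 - remainingValue μ X τ α b n := Finset.sum_range_sub' _ n
    _ ≤ remainingValue μ X τ α b 0 := sub_le_self _ (remainingValue_nonneg hα.1.le hb n)

lemma integral_discReward_eq_of_threshold (hup : ∀ n : ℕ, ∀ ω, τ ω = n → b ≤ X n ω)
    (hdown : ∀ n : ℕ, ∀ ω, ((n + 1 : ℕ) : ℕ∞) ≤ τ ω → X n ω ≤ b) :
    ∫ ω, discReward α X τ ω ∂μ = max x b := by
  have hXi := integrable_of_identDistrib hX0 hident hX1
  have hsucc := remainingValue_succ hXm hX0 hindep hident hτ hfix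
  have hpartial (n : ℕ) : ∑ k ∈ Finset.range n, ∫ ω in {ω | τ ω = k}, α ^ k * X k ω ∂μ =
      remainingValue μ X τ α b 0 - remainingValue μ X τ α b n := by
    rw [← Finset.sum_range_sub']
    exact Finset.sum_congr rfl fun k _ => eq_sub_of_add_eq <|
      setIntegral_add_remainingValue_succ_eq (natFiltration_le hXm) hτ (hXi k) (hsucc k)
        (hup k) (hdown k)
  have htendsto : Tendsto (fun n => ∑ k ∈ Finset.range n, ∫ ω in {ω | τ ω = k}, α ^ k * X k ω ∂μ)
      atTop (𝓝 (remainingValue μ X τ α b 0)) := by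
    simp_rw [hpartial]
    simpa using tendsto_const_nhds.sub (tendsto_remainingValue_atTop ⟨hα.1.le, hα.2⟩ hb hsucc)
  rw [← remainingValue_zero (μ := μ) (τ := τ) (α := α) (b := b) hX0]
  exact tendsto_nhds_unique
    (hasSum_setIntegral_discReward_of_identDistrib hXm hX0 hident hX1 hα hτ).tendsto_sum_nat
    htendsto

end OptimalValue

theorem house_selling_single_exercise_general
    (μ : Measure Ω) [IsProbabilityMeasure μ]
    (X : ℕ → Ω → ℝ) (hXm : ∀ i, Measurable (X i))
    (x : ℝ) (hX0 : ∀ ω, X 0 ω = x)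
    (hindep : iIndepFun (fun k => X (k + 1)) μ)
    (hident : ∀ k : ℕ, IdentDistrib (X (k + 1)) (X 1) μ μ)
    (hL2 : Integrable (fun ω => (X 1 ω) ^ 2) μ)
    (hmean : 0 < ∫ ω, X 1 ω ∂μ)
    (α : ℝ) (hα : α ∈ Set.Ioo (0 : ℝ) 1) :
    ∃ xstar : ℝ,
      (0 < xstar ∧ (1 - α) / α = ∫ ω, max (X 1 ω / xstar - 1) 0 ∂μ) ∧
      (∀ y : ℝ, 0 < y → (1 - α) / α = ∫ ω, max (X 1 ω / y - 1) 0 ∂μ → y = xstar) ∧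
      IsLUB {r : ℝ | ∃ τ : Ω → ℕ∞, IsStoppingTimeN (natFiltration X) τ ∧
          r = ∫ ω, discReward α X τ ω ∂μ}
        (max (x - xstar) 0 + xstar) ∧
      IsStoppingTimeN (natFiltration X)
        (fun ω => ⨅ k ∈ {k : ℕ | xstar ≤ X k ω}, (k : ℕ∞)) ∧
      ∫ ω, discReward α X (fun ω' => ⨅ k ∈ {k : ℕ | xstar ≤ X k ω'}, (k : ℕ∞)) ω ∂μ =
        max (x - xstar) 0 + xstar := by
  have hX1 : Integrable (X 1) μ :=
    ((memLp_two_iff_integrable_sq (hXm 1).aestronglyMeasurable).mpr hL2).integrable one_le_two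
  have hc : 0 < (1 - α) / α := div_pos (sub_pos.mpr hα.2) hα.1
  have hequation (y : ℝ) (hy : 0 < y) : (1 - α) / α = ∫ ω, max (X 1 ω / y - 1) 0 ∂μ ↔
      ∫ ω, max (X 1 ω - y) 0 ∂μ = (1 - α) / α * y := by
    rw [integral_max_div_sub_one hy, eq_div_iff hy.ne', eq_comm]
  obtain ⟨b, hb, hgb⟩ := exists_pos_integral_max_sub_eq_mul hX1 hmean hc
  have hfix : α * ∫ ω, max (X 1 ω) b ∂μ = b := by
    rw [integral_max_eq_add_integral_max_sub hX1, hgb]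
    field_simp [hα.1.ne']
    ring
  have hvalue := integral_discReward_eq_of_threshold hXm hX0 hindep hident hX1 hα hb.le hfix
    (isStoppingTimeN_entryTime X b) (fun _ _ => le_of_entryTime_eq)
    (fun _ _ h => (lt_of_succ_le_entryTime h).le)
  have hmax : max (x - b) 0 + b = max x b := by
    rw [← sub_self b, max_sub_sub_right, sub_add_cancel]
  refine ⟨b, hmax ▸ ⟨⟨hb, (hequation b hb).mpr hgb⟩, fun y hy hy_eq => ?_,
    ⟨?_, fun r hr => hr ⟨entryTime X b, isStoppingTimeN_entryTime X b, hvalue.symm⟩⟩,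
    isStoppingTimeN_entryTime X b, hvalue⟩⟩
  · exact (strictAnti_integral_max_sub_sub_mul hX1 hc).injective <| by
      simp only [(hequation y hy).mp hy_eq, hgb, sub_self]
  · rintro r ⟨τ, hτ, rfl⟩
    exact integral_discReward_le hXm hX0 hindep hident hX1 hα hb.le hfix hτ

/-- **house-selling problem with one exercise.** For i.i.d. nonnegative
offers `X₁, X₂, …` with `𝔼 X₁² < ∞`, `𝔼 X₁ > 0`, discount factor `α ∈ (0,1)` and
`X₀ := x ≥ 0`, there is a unique `x* > 0` with `(1-α)/α = 𝔼((X₁/x* - 1)⁺)`; the optimal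
stopping value `v(x) = sup_τ 𝔼(α^τ X_τ)` equals `(x - x*)⁺ + x*`, and this value is
attained by the threshold rule `τ* = inf{k ≥ 0 : X_k ≥ x*}`. -/
theorem house_selling_single_exercise
    (μ : Measure Ω) [IsProbabilityMeasure μ]
    (X : ℕ → Ω → ℝ) (hXm : ∀ i, Measurable (X i)) (hXpos : ∀ i ω, 0 ≤ X i ω)
    (x : ℝ) (hx : 0 ≤ x) (hX0 : ∀ ω, X 0 ω = x)
    (hindep : iIndepFun (fun k => X (k + 1)) μ)
    (hident : ∀ k : ℕ, IdentDistrib (X (k + 1)) (X 1) μ μ)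
    (hL2 : Integrable (fun ω => (X 1 ω) ^ 2) μ)
    (hmean : 0 < ∫ ω, X 1 ω ∂μ)
    (α : ℝ) (hα : α ∈ Set.Ioo (0 : ℝ) 1) :
    ∃ xstar : ℝ,
      (0 < xstar ∧ (1 - α) / α = ∫ ω, max (X 1 ω / xstar - 1) 0 ∂μ) ∧
      (∀ y : ℝ, 0 < y → (1 - α) / α = ∫ ω, max (X 1 ω / y - 1) 0 ∂μ → y = xstar) ∧
      IsLUB {r : ℝ | ∃ τ : Ω → ℕ∞, IsStoppingTimeN (natFiltration X) τ ∧
          r = ∫ ω, discReward α X τ ω ∂μ}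
        (max (x - xstar) 0 + xstar) ∧
      IsStoppingTimeN (natFiltration X)
        (fun ω => ⨅ k ∈ {k : ℕ | xstar ≤ X k ω}, (k : ℕ∞)) ∧
      ∫ ω, discReward α X (fun ω' => ⨅ k ∈ {k : ℕ | xstar ≤ X k ω'}, (k : ℕ∞)) ω ∂μ =
        max (x - xstar) 0 + xstar :=
  house_selling_single_exercise_general μ X hXm x hX0 hindep hident hL2 hmean α hα
end
end
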